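/- arXiv:2003.04037 — 11 statements merged into one kernel-verified Lean document; each statement's English description precedes it below -/
import Mathlib

section
/- For all real numbers 1 < p < 2 and all t with 0 < t < 1, one has t^p - (1 - p/2) - (p/2) t^2 - (p(p-2)/2)(1-t)^2 ≥ 0. -/
theorem stmt_0 (p t : ℝ) (hp1 : 1 < p) (hp2 : p < 2) (ht0 : 0 < t) (ht1 : t < 1) :
    t ^ p - (1 - p / 2) - (p / 2) * t ^ 2 - (p * (p - 2) / 2) * (1 - t) ^ 2 ≥ 0 := by
  set f : ℝ → ℝ := fun x => x ^ p - (1 - p / 2) - (p / 2) * x ^ 2 - (p * (p - 2) / 2) * (1 - x) ^ 2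
    with hf
  have hp0 : (0:ℝ) < p := by linarith
  have hderiv : ∀ x ∈ Set.Ioo t 1, HasDerivAt f
      (p * x ^ (p - 1) - (p / 2) * (2 * x) - (p * (p - 2) / 2) * (2 * (1 - x) * (-1))) x := by
    intro x hx
    have h1 : HasDerivAt (fun x : ℝ => x ^ p) (p * x ^ (p - 1)) x := by
      simpa using Real.hasDerivAt_rpow_const (p := p) (x := x) (Or.inr hp1.le)
    have h2 : HasDerivAt (fun x : ℝ => (p / 2) * x ^ 2) ((p / 2) * (2 * x)) x := by
      have := (hasDerivAt_pow 2 x).const_mul (p / 2)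
      simpa [mul_comm] using this
    have h3 : HasDerivAt (fun x : ℝ => (p * (p - 2) / 2) * (1 - x) ^ 2)
        ((p * (p - 2) / 2) * (2 * (1 - x) * (-1))) x := by
      have hb : HasDerivAt (fun x : ℝ => (1 - x)) (-1) x := by
        simpa using (hasDerivAt_id x).const_sub 1
      have := ((hb.pow 2).const_mul (p * (p - 2) / 2))
      simpa [mul_comm, mul_assoc, mul_left_comm] using this
    exact ((h1.sub_const _).sub h2).sub h3
  have hanti : AntitoneOn f (Set.Icc t 1) := by
    apply antitoneOn_of_deriv_nonpos (convex_Icc t 1)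
    · apply ContinuousOn.sub (ContinuousOn.sub (ContinuousOn.sub _ continuousOn_const) _) _
      · exact fun x hx => (Real.continuousAt_rpow_const x p (Or.inr hp0.le)).continuousWithinAt
      · fun_prop
      · fun_prop
    · intro x hx
      rw [interior_Icc] at hx
      exact ((hderiv x hx).differentiableAt).differentiableWithinAt
    · intro x hx
      rw [interior_Icc] at hx
      rw [(hderiv x hx).deriv]
      have hx0 : 0 < x := lt_trans ht0 hx.1
      have hx1 : x < 1 := hx.2
      -- AM-GM: x^(p-1) = x^(p-1) * 1^(2-p) ≤ (p-1)*x + (2-p)*1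
      have key : x ^ (p - 1) ≤ (p - 1) * x + (2 - p) * 1 := by
        have := Real.geom_mean_le_arith_mean2_weighted (w₁ := p - 1) (w₂ := 2 - p)
          (p₁ := x) (p₂ := 1) (by linarith) (by linarith) hx0.le zero_le_one (by ring)
        simpa using this
      nlinarith [key]
  have hft : f t ≥ f 1 := hanti (Set.left_mem_Icc.2 ht1.le) (Set.right_mem_Icc.2 ht1.le) ht1.le
  have hf1 : f 1 = 0 := by simp [hf]
  calc f t ≥ f 1 := hft
    _ = 0 := hf1
end

section
/- For all real numbers 1 < p < 2 and all t with 0 < t ≤ 1, one has 1 - (1 - p/2) t^p - (p/2) t^{p-2} - (p(p-2)/2) · t^{p-2}(t-1)^2 / ((2-p) + (p-1)t) ≥ 0. -/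
-- Padé-type upper bound: for 1<p<2, 0<t≤1:  t^(p-1) * ((2-p)*t + p) ≤ p*t + (2-p)
lemma pade (p t : ℝ) (hp1 : 1 < p) (hp2 : p < 2) (ht0 : 0 < t) (ht1 : t ≤ 1) :
    t ^ (p-1) * ((2-p)*t + p) ≤ p*t + (2-p) := by
  set F : ℝ → ℝ := fun x => p*x + (2-p) - (2-p)*x^p - p*x^(p-1) with hF
  set G : ℝ → ℝ := fun x => p - (2-p)*(p*x^(p-1)) - p*((p-1)*x^(p-1-1)) with hG
  have hFd : ∀ x : ℝ, 0 < x → HasDerivAt F (G x) x := by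
    intro x hx
    have h1 : HasDerivAt (fun y : ℝ => y^p) (p*x^(p-1)) x :=
      Real.hasDerivAt_rpow_const (Or.inl hx.ne')
    have h2 : HasDerivAt (fun y : ℝ => y^(p-1)) ((p-1)*x^(p-1-1)) x :=
      Real.hasDerivAt_rpow_const (Or.inl hx.ne')
    have h3 : HasDerivAt (fun y : ℝ => p*y + (2-p)) p x := by
      simpa using ((hasDerivAt_id x).const_mul p).add_const (2-p)
    simpa [hF, hG, Pi.sub_def] using (h3.sub (h1.const_mul (2-p))).sub (h2.const_mul p)
  have hGd : ∀ x : ℝ, 0 < x → HasDerivAt G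
      (-( (2-p)*(p*((p-1)*x^(p-1-1))) ) - p*((p-1)*((p-1-1)*x^(p-1-1-1)))) x := by
    intro x hx
    have h2 : HasDerivAt (fun y : ℝ => y^(p-1)) ((p-1)*x^(p-1-1)) x :=
      Real.hasDerivAt_rpow_const (Or.inl hx.ne')
    have h3 : HasDerivAt (fun y : ℝ => y^(p-1-1)) ((p-1-1)*x^(p-1-1-1)) x :=
      Real.hasDerivAt_rpow_const (Or.inl hx.ne')
    have := ((hasDerivAt_const x p).sub ((h2.const_mul p).const_mul (2-p))).sub
      ((h3.const_mul (p-1)).const_mul p)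
    simpa [hG, mul_comm, mul_left_comm, Pi.sub_def] using this
  -- G is monotone on [t,1]
  have hGmono : MonotoneOn G (Set.Icc t 1) := by
    apply monotoneOn_of_deriv_nonneg (convex_Icc t 1)
    · exact fun x hx => ((hGd x (lt_of_lt_of_le ht0 hx.1)).continuousAt).continuousWithinAt
    · intro x hx
      rw [interior_Icc] at hx
      exact ((hGd x (lt_trans ht0 hx.1)).differentiableAt).differentiableWithinAt
    · intro x hx
      rw [interior_Icc] at hx
      have hx0 : 0 < x := lt_trans ht0 hx.1
      rw [(hGd x hx0).deriv]
      have e1 : x^(p-1-1) = x^(p-1-1-1) * x := by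
        rw [← Real.rpow_add_one hx0.ne']; ring_nf
      have h4 : (0:ℝ) ≤ x^(p-1-1-1) := Real.rpow_nonneg hx0.le _
      rw [e1]
      have h5 : 0 ≤ p*((p-1)*((2-p)*((1-x)*x^(p-1-1-1)))) :=
        mul_nonneg (by linarith) (mul_nonneg (by linarith) (mul_nonneg (by linarith)
          (mul_nonneg (by linarith [hx.2]) h4)))
      nlinarith [h5]
  -- hence G ≤ G 1 = 0 on [t,1]
  have hG1 : G 1 = 0 := by simp [hG]; ring
  have hGle : ∀ x ∈ Set.Icc t 1, G x ≤ 0 := by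
    intro x hx
    have := hGmono hx (Set.right_mem_Icc.mpr ht1) hx.2
    linarith [hG1 ▸ this]
  -- F is antitone on [t,1]
  have hFanti : AntitoneOn F (Set.Icc t 1) := by
    apply antitoneOn_of_deriv_nonpos (convex_Icc t 1)
    · exact fun x hx => ((hFd x (lt_of_lt_of_le ht0 hx.1)).continuousAt).continuousWithinAt
    · intro x hx
      rw [interior_Icc] at hx
      exact ((hFd x (lt_trans ht0 hx.1)).differentiableAt).differentiableWithinAt
    · intro x hx
      rw [interior_Icc] at hx
      rw [(hFd x (lt_trans ht0 hx.1)).deriv]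
      exact hGle x ⟨hx.1.le, hx.2.le⟩
  have hF1 : F 1 = 0 := by simp [hF]
  have hFt : 0 ≤ F t := by
    have := hFanti (Set.left_mem_Icc.mpr ht1) (Set.right_mem_Icc.mpr ht1) ht1
    linarith [hF1 ▸ this]
  have htp : t^p = t^(p-1) * t := by
    rw [← Real.rpow_add_one ht0.ne']; ring_nf
  simp only [hF] at hFt
  rw [htp] at hFt
  nlinarith [hFt]

theorem stmt_1 (p t : ℝ) (hp1 : 1 < p) (hp2 : p < 2) (ht0 : 0 < t) (ht1 : t ≤ 1) :
    1 - (1 - p / 2) * t ^ p - (p / 2) * t ^ (p - 2)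
      - (p * (p - 2) / 2) * (t ^ (p - 2) * (t - 1) ^ 2 / ((2 - p) + (p - 1) * t)) ≥ 0 := by
  have pade : t ^ (p-1) * ((2-p)*t + p) ≤ p*t + (2-p) := pade p t hp1 hp2 ht0 ht1
  have hD : 0 < (2-p) + (p-1)*t := by nlinarith
  have hK : 0 ≤ ((2-p)+(p-1)*t)*(p+(2-p)*t^2) - p*(2-p)*(1-t)^2 := by
    nlinarith [mul_pos ht0 (sub_pos.mpr hp1), sq_nonneg (1-t), mul_nonneg ht0.le (sub_pos.mpr hp2).le,
      mul_nonneg (mul_nonneg ht0.le ht0.le) (sub_pos.mpr hp1).le]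
  have hP : (((2-p)+(p-1)*t)*(p+(2-p)*t^2) - p*(2-p)*(1-t)^2)*(p*t+(2-p))
      ≤ 2*t*((2-p)+(p-1)*t)*((2-p)*t+p) := by
    have h6 : 0 ≤ p*((p-1)*((2-p)*(t*(1-t)^3))) :=
      mul_nonneg (by linarith) (mul_nonneg (by linarith) (mul_nonneg (by linarith)
        (mul_nonneg ht0.le (by nlinarith))))
    nlinarith [h6]
  have hqp : 0 < (2-p)*t+p := by nlinarith
  have key : t^(p-1) * (((2-p)+(p-1)*t)*(p+(2-p)*t^2) - p*(2-p)*(1-t)^2)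
      ≤ 2*t*((2-p)+(p-1)*t) := by
    have h := mul_le_mul_of_nonneg_right pade hK
    refine le_of_mul_le_mul_right ?_ hqp
    nlinarith [h, hP]
  have h1 : t^p = t^(p-1)*t := by rw [← Real.rpow_add_one ht0.ne']; ring_nf
  have h2 : t^(p-2) = t^(p-1)/t := by
    rw [eq_div_iff ht0.ne', ← Real.rpow_add_one ht0.ne']; ring_nf
  have hE : 1 - (1 - p / 2) * t ^ p - (p / 2) * t ^ (p - 2)
      - (p * (p - 2) / 2) * (t ^ (p - 2) * (t - 1) ^ 2 / ((2 - p) + (p - 1) * t))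
      = (2*t*((2-p)+(p-1)*t) - t^(p-1)*(((2-p)+(p-1)*t)*(p+(2-p)*t^2) - p*(2-p)*(1-t)^2))
        / (2*t*((2-p)+(p-1)*t)) := by
    rw [h1, h2]
    field_simp
    ring
  rw [ge_iff_le, hE]
  apply div_nonneg (by linarith [key])
  positivity
end

section
/- For all real numbers p ≥ 2 and all t ≥ 1, one has 1 - (1 - p/2) t^p - (p/2) t^{p-2} - (p(p-2)/2) (t-1)^2/t ≥ 0. -/
theorem stmt_2 (p t : ℝ) (hp : 2 ≤ p) (ht : 1 ≤ t) :
    1 - (1 - p / 2) * t ^ p - (p / 2) * t ^ (p - 2)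
      - (p * (p - 2) / 2) * ((t - 1) ^ 2 / t) ≥ 0 := by
  set f : ℝ → ℝ := fun s => 1 - (1 - p / 2) * s ^ p - (p / 2) * s ^ (p - 2)
      - (p * (p - 2) / 2) * ((s - 1) ^ 2 / s) with hfdef
  have hc : 0 ≤ p * (p - 2) / 2 := by nlinarith
  have hderiv : ∀ s ∈ Set.Ioi (1:ℝ), HasDerivAt f
      ((p*(p-2)/2) * (s ^ (p-1) - s ^ (p-3) - (s^2 - 1)/s^2)) s := by
    intro s hs
    have hs1 : (1:ℝ) < s := hs
    have hs0' : (0:ℝ) < s := by linarith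
    have hs0 : s ≠ 0 := ne_of_gt hs0'
    have h1 : HasDerivAt (fun s : ℝ => s ^ p) (p * s ^ (p-1)) s :=
      Real.hasDerivAt_rpow_const (Or.inl hs0)
    have h2 : HasDerivAt (fun s : ℝ => s ^ (p-2)) ((p-2) * s ^ (p-2-1)) s :=
      Real.hasDerivAt_rpow_const (Or.inl hs0)
    have h3 : HasDerivAt (fun s : ℝ => (s-1)^2 / s)
        (((2:ℕ) * (s-1)^(2-1) * 1 * s - (s-1)^2 * 1) / s^2) s :=
      (((hasDerivAt_id s).sub_const 1).pow 2).div (hasDerivAt_id s) hs0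
    have hall := (((hasDerivAt_const s (1:ℝ)).sub (h1.const_mul (1 - p/2))).sub
        (h2.const_mul (p/2))).sub (h3.const_mul (p*(p-2)/2))
    convert hall using 1
    · rfl
    · rfl
    · rfl
    have e1 : p - 2 - 1 = p - 3 := by ring
    rw [e1]
    have e2 : s ^ (p-1) = s ^ (p-3) * s ^ 2 := by
      rw [← Real.rpow_natCast s 2, ← Real.rpow_add hs0']
      congr 1; ring
    rw [e2]
    field_simp
    ring
  have hkey : ∀ s ∈ Set.Ioi (1:ℝ),
      0 ≤ (p*(p-2)/2) * (s ^ (p-1) - s ^ (p-3) - (s^2 - 1)/s^2) := by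
    intro s hs
    have hs1 : (1:ℝ) < s := hs
    have hs0' : (0:ℝ) < s := by linarith
    apply mul_nonneg hc
    have e2 : s ^ (p-1) = s ^ (p-3) * s ^ 2 := by
      rw [← Real.rpow_natCast s 2, ← Real.rpow_add hs0']
      congr 1; ring
    have hexp : s ^ (-2:ℝ) ≤ s ^ (p-3) :=
      Real.rpow_le_rpow_of_exponent_le (le_of_lt hs1) (by linarith)
    have hneg : s ^ (-2:ℝ) = 1 / s^2 := by
      rw [Real.rpow_neg (le_of_lt hs0'), ← Real.rpow_natCast s 2]
      norm_num
    have hsq : (0:ℝ) ≤ s^2 - 1 := by nlinarith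
    have hmul : (1/s^2) * (s^2 - 1) ≤ s ^ (p-3) * (s^2 - 1) := by
      apply mul_le_mul_of_nonneg_right _ hsq
      rw [← hneg]; exact hexp
    have hs2 : (0:ℝ) < s^2 := by positivity
    rw [e2]
    have : (s^2 - 1)/s^2 = (1/s^2) * (s^2 - 1) := by field_simp
    rw [this]
    nlinarith [hmul]
  have hcont : ContinuousOn f (Set.Ici 1) := by
    intro s hs
    have hs1 : (1:ℝ) ≤ s := hs
    have hs0 : s ≠ 0 := by intro h; rw [h] at hs1; norm_num at hs1
    apply ContinuousAt.continuousWithinAt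
    have c1 : ContinuousAt (fun s : ℝ => s ^ p) s :=
      Real.continuousAt_rpow_const s p (Or.inl hs0)
    have c2 : ContinuousAt (fun s : ℝ => s ^ (p-2)) s :=
      Real.continuousAt_rpow_const s (p-2) (Or.inl hs0)
    have c3 : ContinuousAt (fun s : ℝ => (s-1)^2 / s) s := by
      apply ContinuousAt.div
      · fun_prop
      · fun_prop
      · exact hs0
    exact (((continuousAt_const).sub (c1.const_mul _)).sub (c2.const_mul _)).sub
      (c3.const_mul _)
  have hmono : MonotoneOn f (Set.Ici 1) := by
    apply monotoneOn_of_deriv_nonneg (convex_Ici 1) hcont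
    · intro s hs
      rw [interior_Ici] at hs
      exact (hderiv s hs).differentiableAt.differentiableWithinAt
    · intro s hs
      rw [interior_Ici] at hs
      rw [(hderiv s hs).deriv]
      exact hkey s hs
  have hf1 : f 1 = 0 := by
    simp only [hfdef, Real.one_rpow]
    norm_num
  have := hmono (Set.self_mem_Ici) ht ht
  rw [hf1] at this
  exact this
end

section
/- Let p ≥ 2 and x, y ∈ ℝⁿ. Define w = x if |x| ≤ |x+y|, and w = (|x+y|/|x|)^{1/(p-2)} (x+y) if |x+y| ≤ |x| (with x ≠ 0; the definition is irrelevant when p = 2). Then |x+y|^p ≥ |x|^p + p|x|^{p-2} x·y + (1/2)( p |x|^{p-2} |y|^2 + p(p-2)|w|^{p-2}(|x| - |x+y|)^2 ). -/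
-- Bernoulli
lemma bern' (q u : ℝ) (hq : 1 ≤ q) (hu : 0 ≤ u) : 1 + q * (u - 1) ≤ u ^ q := by
  have h := one_add_mul_self_le_rpow_one_add (s := u - 1) (by linarith) hq
  simpa using h

-- Bernoulli consequence: for 0 < a ≤ t, a^(p-2)*t + (p-2)*a^(p-2)*(t-a) ≤ t^(p-1)
lemma bernA (p a t : ℝ) (hp : 2 ≤ p) (ha : 0 < a) (hat : a ≤ t) :
    a ^ (p-2) * t + (p-2) * (a ^ (p-2) * (t - a)) ≤ t ^ (p-1) := by
  have ht : 0 < t := lt_of_lt_of_le ha hat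
  have hb := bern' (p-1) (t/a) (by linarith) (by positivity)
  have hmul := mul_le_mul_of_nonneg_right hb (Real.rpow_pos_of_pos ha (p-1)).le
  have htp : (t/a) ^ (p-1) * a ^ (p-1) = t ^ (p-1) := by
    rw [Real.div_rpow ht.le ha.le, div_mul_cancel₀]
    exact (Real.rpow_pos_of_pos ha _).ne'
  have hAa : a ^ (p-1) = a ^ (p-2) * a := by
    rw [show p - 1 = (p-2) + 1 by ring, Real.rpow_add ha, Real.rpow_one]
  have hexp : (1 + (p-1) * (t/a - 1)) * a ^ (p-1)
      = a ^ (p-2) * t + (p-2) * (a ^ (p-2) * (t - a)) := by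
    rw [hAa]; field_simp; ring
  linarith [hmul, htp.le, htp.ge, hexp.le, hexp.ge]

lemma keyA (p a b : ℝ) (hp : 2 ≤ p) (ha : 0 < a) (hab : a ≤ b) :
    a ^ p + (p/2) * a ^ (p-2) * (b^2 - a^2) + (p*(p-2)/2) * a ^ (p-2) * (b-a)^2 ≤ b ^ p := by
  set g : ℝ → ℝ := fun t => t ^ p - (p/2) * a ^ (p-2) * t^2 - (p*(p-2)/2) * a ^ (p-2) * (t-a)^2
    with hg
  have hder : ∀ t : ℝ, 0 < t → HasDerivAt g
      (p * t ^ (p-1) - (p/2) * a ^ (p-2) * (2*t) - (p*(p-2)/2) * a ^ (p-2) * (2*(t-a))) t := by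
    intro t ht
    have h1 : HasDerivAt (fun s : ℝ => s ^ p) (p * t ^ (p-1)) t :=
      Real.hasDerivAt_rpow_const (Or.inl ht.ne')
    have h2 : HasDerivAt (fun s : ℝ => (p/2) * a ^ (p-2) * s^2) ((p/2) * a ^ (p-2) * (2*t)) t := by
      simpa [mul_comm, mul_assoc, mul_left_comm] using
        (hasDerivAt_pow 2 t).const_mul ((p/2) * a ^ (p-2))
    have h3 : HasDerivAt (fun s : ℝ => (p*(p-2)/2) * a ^ (p-2) * (s-a)^2)
        ((p*(p-2)/2) * a ^ (p-2) * (2*(t-a))) t := by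
      have h4 : HasDerivAt (fun s : ℝ => (s-a)^2) (2*(t-a)) t := by
        simpa using (((hasDerivAt_id t).sub_const a).fun_pow 2)
      simpa [mul_comm, mul_assoc, mul_left_comm] using h4.const_mul ((p*(p-2)/2) * a ^ (p-2))
    exact (h1.sub h2).sub h3
  have hmono : MonotoneOn g (Set.Icc a b) := by
    apply monotoneOn_of_deriv_nonneg (convex_Icc a b)
    · exact fun t ht => ((hder t (lt_of_lt_of_le ha ht.1)).continuousAt).continuousWithinAt
    · intro t ht
      rw [interior_Icc] at ht
      exact ((hder t (lt_of_lt_of_le ha ht.1.le)).differentiableAt).differentiableWithinAt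
    · intro t ht
      rw [interior_Icc] at ht
      have htpos : 0 < t := lt_of_lt_of_le ha ht.1.le
      rw [(hder t htpos).deriv]
      have hkey := bernA p a t hp ha ht.1.le
      nlinarith [hkey, hp]
  have := hmono (Set.left_mem_Icc.2 hab) (Set.right_mem_Icc.2 hab) hab
  simp only [hg] at this
  nlinarith [this]

lemma bernB (p a t : ℝ) (hp : 2 ≤ p) (ht : 0 < t) (hta : t ≤ a) :
    a * t ^ (p-1) + (p-2) * (t ^ (p-1) * (a - t)) ≤ a ^ (p-1) * t := by
  have ha : 0 < a := lt_of_lt_of_le ht hta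
  have hb := bern' (p-1) (a/t) (by linarith) (by positivity)
  have hmul := mul_le_mul_of_nonneg_right hb
    (by positivity : (0:ℝ) ≤ t ^ (p-1) * t)
  have hrhs : (a/t) ^ (p-1) * (t ^ (p-1) * t) = a ^ (p-1) * t := by
    rw [Real.div_rpow ha.le ht.le]
    field_simp
  have hlhs : (1 + (p-1) * (a/t - 1)) * (t ^ (p-1) * t)
      = a * t ^ (p-1) + (p-2) * (t ^ (p-1) * (a - t)) := by
    field_simp; ring
  linarith [hmul, hrhs.le, hrhs.ge, hlhs.le, hlhs.ge]

lemma keyB (p a b : ℝ) (hp : 2 ≤ p) (hb : 0 < b) (hba : b ≤ a) :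
    a ^ p + (p/2) * a ^ (p-2) * (b^2 - a^2) + (p*(p-2)/2) * (b ^ (p-1) / a) * (b-a)^2 ≤ b ^ p := by
  have ha : 0 < a := lt_of_lt_of_le hb hba
  set g : ℝ → ℝ := fun t => t ^ p - (p/2) * a ^ (p-2) * t^2
      - (p*(p-2)/2) * (b ^ (p-1) / a) * (t-a)^2 with hg
  have hder : ∀ t : ℝ, 0 < t → HasDerivAt g
      (p * t ^ (p-1) - (p/2) * a ^ (p-2) * (2*t)
        - (p*(p-2)/2) * (b ^ (p-1) / a) * (2*(t-a))) t := by
    intro t ht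
    have h1 : HasDerivAt (fun s : ℝ => s ^ p) (p * t ^ (p-1)) t :=
      Real.hasDerivAt_rpow_const (Or.inl ht.ne')
    have h2 : HasDerivAt (fun s : ℝ => (p/2) * a ^ (p-2) * s^2) ((p/2) * a ^ (p-2) * (2*t)) t := by
      simpa [mul_comm, mul_assoc, mul_left_comm] using
        (hasDerivAt_pow 2 t).const_mul ((p/2) * a ^ (p-2))
    have h3 : HasDerivAt (fun s : ℝ => (p*(p-2)/2) * (b ^ (p-1) / a) * (s-a)^2)
        ((p*(p-2)/2) * (b ^ (p-1) / a) * (2*(t-a))) t := by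
      have h4 : HasDerivAt (fun s : ℝ => (s-a)^2) (2*(t-a)) t := by
        simpa using (((hasDerivAt_id t).sub_const a).fun_pow 2)
      simpa [mul_comm, mul_assoc, mul_left_comm] using
        h4.const_mul ((p*(p-2)/2) * (b ^ (p-1) / a))
    exact (h1.sub h2).sub h3
  have hanti : AntitoneOn g (Set.Icc b a) := by
    apply antitoneOn_of_deriv_nonpos (convex_Icc b a)
    · exact fun t ht => ((hder t (lt_of_lt_of_le hb ht.1)).continuousAt).continuousWithinAt
    · intro t ht
      rw [interior_Icc] at ht
      exact ((hder t (lt_of_lt_of_le hb ht.1.le)).differentiableAt).differentiableWithinAt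
    · intro t ht
      rw [interior_Icc] at ht
      have htpos : 0 < t := lt_of_lt_of_le hb ht.1.le
      rw [(hder t htpos).deriv]
      have e1 := bernB p a t hp htpos ht.2.le
      have e2 : b ^ (p-1) ≤ t ^ (p-1) := Real.rpow_le_rpow hb.le ht.1.le (by linarith)
      have e3 : (p-2) * (b ^ (p-1) * (a - t)) ≤ (p-2) * (t ^ (p-1) * (a - t)) := by
        apply mul_le_mul_of_nonneg_left _ (by linarith)
        exact mul_le_mul_of_nonneg_right e2 (by linarith [ht.2])
      have h5 : a * t ^ (p-1) + (p-2) * (b ^ (p-1) * (a - t)) ≤ a ^ (p-1) * t := by linarith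
      have hApa : a ^ (p-1) = a ^ (p-2) * a := by
        rw [show p - 1 = (p-2) + 1 by ring, Real.rpow_add ha, Real.rpow_one]
      rw [hApa] at h5
      set B := b ^ (p-1) / a with hBdef
      have hB : b ^ (p-1) = B * a := (div_mul_cancel₀ _ ha.ne').symm
      rw [hB] at h5
      nlinarith [h5, ha, hp]
  have := hanti (Set.left_mem_Icc.2 hba) (Set.right_mem_Icc.2 hba) hba
  simp only [hg] at this
  nlinarith [this]

open scoped RealInnerProductSpace

theorem stmt_3 (n : ℕ) (p : ℝ) (hp : 2 ≤ p)
    (x y : EuclideanSpace ℝ (Fin n)) (hx : x ≠ 0)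
    (w : EuclideanSpace ℝ (Fin n))
    (hw : w = if ‖x‖ ≤ ‖x + y‖ then x
              else (‖x + y‖ / ‖x‖) ^ (1 / (p - 2)) • (x + y)) :
    ‖x + y‖ ^ p ≥ ‖x‖ ^ p + p * ‖x‖ ^ (p - 2) * ⟪x, y⟫
      + (1 / 2) * (p * ‖x‖ ^ (p - 2) * ‖y‖ ^ 2
          + p * (p - 2) * ‖w‖ ^ (p - 2) * (‖x‖ - ‖x + y‖) ^ 2) := by
  have ha : (0:ℝ) < ‖x‖ := norm_pos_iff.2 hx
  have hb0 : (0:ℝ) ≤ ‖x + y‖ := norm_nonneg _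
  have hy2 : (‖y‖:ℝ) ^ 2 = ‖x + y‖ ^ 2 - ‖x‖ ^ 2 - 2 * ⟪x, y⟫ := by
    have := norm_add_sq_real x y; linarith
  have main : ‖x‖ ^ p + (p/2) * ‖x‖ ^ (p-2) * (‖x + y‖^2 - ‖x‖^2)
      + (p*(p-2)/2) * ‖w‖ ^ (p-2) * (‖x + y‖ - ‖x‖)^2 ≤ ‖x + y‖ ^ p := by
    by_cases hle : ‖x‖ ≤ ‖x + y‖
    · rw [hw, if_pos hle]
      exact keyA p ‖x‖ ‖x + y‖ hp ha hle
    · rw [hw, if_neg hle]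
      push_neg at hle
      rcases eq_or_lt_of_le hp with hp2 | hp2
      · have h22 : p - 2 = 0 := by rw [← hp2]; ring
        rw [h22, Real.rpow_zero, Real.rpow_zero, ← hp2]
        rw [show ((2:ℝ)) = ((2:ℕ):ℝ) by norm_num, Real.rpow_natCast, Real.rpow_natCast]
        nlinarith [sq_nonneg (‖x + y‖ - ‖x‖)]
      · have hpne : p - 2 ≠ 0 := (by linarith : (0:ℝ) < p - 2).ne'
        by_cases hbz : ‖x + y‖ = 0
        · have hxy0 : x + y = 0 := norm_eq_zero.1 hbz
          rw [hbz, hxy0, smul_zero, norm_zero, Real.zero_rpow hpne,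
            Real.zero_rpow (by linarith : (0:ℝ) < p).ne']
          have hap : ‖x‖ ^ (p-2) * ‖x‖ ^ 2 = ‖x‖ ^ p := by
            rw [show (‖x‖:ℝ)^2 = ‖x‖ ^ ((2:ℕ):ℝ) by rw [Real.rpow_natCast],
              ← Real.rpow_add ha]
            norm_num
          nlinarith [Real.rpow_pos_of_pos ha p, hap]
        · have hbpos : 0 < ‖x + y‖ := lt_of_le_of_ne hb0 (Ne.symm hbz)
          have hc0 : (0:ℝ) ≤ (‖x + y‖ / ‖x‖) ^ (1/(p-2)) :=
            Real.rpow_nonneg (by positivity) _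
          have hwn : ‖((‖x + y‖ / ‖x‖) ^ (1/(p-2))) • (x + y)‖ ^ (p-2)
              = ‖x + y‖ ^ (p-1) / ‖x‖ := by
            rw [norm_smul, Real.norm_eq_abs, abs_of_nonneg hc0,
              Real.mul_rpow hc0 hb0]
            rw [← Real.rpow_mul (by positivity : (0:ℝ) ≤ ‖x + y‖ / ‖x‖),
              one_div_mul_cancel hpne, Real.rpow_one]
            rw [div_mul_eq_mul_div]
            congr 1
            rw [show p - 1 = (p-2) + 1 by ring, Real.rpow_add_one hbpos.ne', mul_comm]
          rw [hwn]
          exact keyB p ‖x‖ ‖x + y‖ hp hbpos hle.le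
  rw [ge_iff_le, hy2]
  have hEq : ‖x‖ ^ p + p * ‖x‖ ^ (p - 2) * ⟪x, y⟫
      + (1 / 2) * (p * ‖x‖ ^ (p - 2) * (‖x + y‖ ^ 2 - ‖x‖ ^ 2 - 2 * ⟪x, y⟫)
          + p * (p - 2) * ‖w‖ ^ (p - 2) * (‖x‖ - ‖x + y‖) ^ 2)
      = ‖x‖ ^ p + (p/2) * ‖x‖ ^ (p-2) * (‖x + y‖^2 - ‖x‖^2)
      + (p*(p-2)/2) * ‖w‖ ^ (p-2) * (‖x + y‖ - ‖x‖)^2 := by ring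
  rw [hEq]
  exact main
end

section
/- Let 1 < p < 2 and x, y ∈ ℝⁿ with x ≠ 0. Define w = ((|x+y|)/((2-p)|x+y| + (p-1)|x|))^{1/(p-2)} x if |x| < |x+y|, and w = x if |x+y| ≤ |x|. Then |x+y|^p ≥ |x|^p + p|x|^{p-2} x·y + (1/2)( p |x|^{p-2} |y|^2 + p(p-2)|w|^{p-2}(|x| - |x+y|)^2 ). -/
open scoped RealInnerProductSpace

-- Concave Bernoulli: for 0 ≤ q ≤ 1 and t ≥ 0, t^q ≤ 1 + q(t-1).
lemma bern_aux {q t : ℝ} (hq0 : 0 ≤ q) (hq1 : q ≤ 1) (ht : 0 ≤ t) :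
    t ^ q ≤ 1 + q * (t - 1) := by
  have h := rpow_one_add_le_one_add_mul_self (s := t - 1) (by linarith) hq0 hq1
  have e : (1 : ℝ) + (t - 1) = t := by ring
  rwa [e] at h

-- Case t ∈ [0,1]
lemma caseA (p : ℝ) (hp1 : 1 < p) (hp2 : p < 2) {t : ℝ} (ht0 : 0 ≤ t) (ht1 : t ≤ 1) :
    1 + (p / 2) * (t ^ 2 - 1) + (p * (p - 2) / 2) * (t - 1) ^ 2 ≤ t ^ p := by
  set g : ℝ → ℝ := fun u => u ^ p - 1 - (p / 2) * (u ^ 2 - 1) - (p * (p - 2) / 2) * (u - 1) ^ 2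
    with hg
  have hd : ∀ s : ℝ, HasDerivAt g (p * s ^ (p - 1) - p * s - p * (p - 2) * (s - 1)) s := by
    intro s
    have h1 : HasDerivAt (fun u : ℝ => u ^ p) (p * s ^ (p - 1)) s :=
      Real.hasDerivAt_rpow_const (Or.inr hp1.le)
    have h2 : HasDerivAt (fun u : ℝ => (p / 2) * (u ^ 2 - 1)) ((p / 2) * (2 * s ^ 1)) s :=
      ((hasDerivAt_pow 2 s).sub_const 1).const_mul (p / 2)
    have h3 : HasDerivAt (fun u : ℝ => (p * (p - 2) / 2) * (u - 1) ^ 2)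
        ((p * (p - 2) / 2) * (2 * (s - 1) ^ 1 * 1)) s :=
      (((hasDerivAt_id s).sub_const 1).pow 2).const_mul (p * (p - 2) / 2)
    have := ((h1.sub_const 1).sub h2).sub h3
    exact this.congr_deriv (by ring)
  have hanti : AntitoneOn g (Set.Icc 0 1) := by
    apply antitoneOn_of_deriv_nonpos (convex_Icc 0 1)
    · exact fun s _ => (hd s).continuousAt.continuousWithinAt
    · exact fun s _ => (hd s).differentiableAt.differentiableWithinAt
    · intro s hs
      rw [interior_Icc] at hs
      rw [(hd s).deriv]
      have hb := bern_aux (q := p - 1) (by linarith) (by linarith) hs.1.le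
      nlinarith [hs.1.le, hb, hp1]
  have h1 : g 1 ≤ g t := hanti ⟨ht0, ht1⟩ ⟨zero_le_one, le_refl 1⟩ ht1
  have hg1 : g 1 = 0 := by simp [hg, Real.one_rpow]
  rw [hg1] at h1
  simp only [hg] at h1
  linarith

-- Case t ≥ 1
lemma caseB (p : ℝ) (hp1 : 1 < p) (hp2 : p < 2) {t : ℝ} (ht : 1 ≤ t) :
    1 + (p / 2) * (t ^ 2 - 1)
      + (p * (p - 2) / 2) * (t / ((2 - p) * t + (p - 1))) * (t - 1) ^ 2 ≤ t ^ p := by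
  have ht0 : (0 : ℝ) < t := lt_of_lt_of_le one_pos ht
  have hDt : 0 < (2 - p) * t + (p - 1) := by nlinarith
  set F : ℝ → ℝ := fun s => (2 - p) * s ^ (p + 1) + (p - 1) * s ^ p - (p * (3 - p) / 2) * s ^ 2
      + (2 - p) * (p - 1) * s - (2 - p) * (p - 1) / 2 with hF
  set F1 : ℝ → ℝ := fun s => (2 - p) * (p + 1) * s ^ p + p * (p - 1) * s ^ (p - 1)
      - p * (3 - p) * s + (2 - p) * (p - 1) with hF1
  -- derivative of F is F1
  have hdF : ∀ s : ℝ, 0 < s → HasDerivAt F (F1 s) s := by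
    intro s hs
    have h1 : HasDerivAt (fun u : ℝ => u ^ (p + 1)) ((p + 1) * s ^ (p + 1 - 1)) s :=
      Real.hasDerivAt_rpow_const (Or.inl (ne_of_gt hs))
    have h2 : HasDerivAt (fun u : ℝ => u ^ p) (p * s ^ (p - 1)) s :=
      Real.hasDerivAt_rpow_const (Or.inl (ne_of_gt hs))
    have h3 : HasDerivAt (fun u : ℝ => u ^ 2) (2 * s ^ 1) s := by
      simpa using hasDerivAt_pow 2 s
    have := ((((h1.const_mul (2 - p)).add (h2.const_mul (p - 1))).sub
      (h3.const_mul (p * (3 - p) / 2))).add ((hasDerivAt_id s).const_mul ((2 - p) * (p - 1)))).sub_const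
      ((2 - p) * (p - 1) / 2)
    have he : p + 1 - 1 = p := by ring
    rw [he] at this
    exact this.congr_deriv (by simp only [hF1]; ring)
  -- derivative of F1 on s > 0
  have hdF1 : ∀ s : ℝ, 0 < s → HasDerivAt F1
      ((2 - p) * (p + 1) * (p * s ^ (p - 1)) + p * (p - 1) * ((p - 1) * s ^ (p - 2))
        - p * (3 - p)) s := by
    intro s hs
    have h1 : HasDerivAt (fun u : ℝ => u ^ p) (p * s ^ (p - 1)) s :=
      Real.hasDerivAt_rpow_const (Or.inl (ne_of_gt hs))
    have h2 : HasDerivAt (fun u : ℝ => u ^ (p - 1)) ((p - 1) * s ^ (p - 1 - 1)) s :=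
      Real.hasDerivAt_rpow_const (Or.inl (ne_of_gt hs))
    have he : p - 1 - 1 = p - 2 := by ring
    rw [he] at h2
    have := (((h1.const_mul ((2 - p) * (p + 1))).add (h2.const_mul (p * (p - 1)))).sub
      ((hasDerivAt_id s).const_mul (p * (3 - p)))).add_const ((2 - p) * (p - 1))
    exact this.congr_deriv (by ring)
  -- F1' ≥ 0 on s ≥ 1
  have hF2 : ∀ s : ℝ, 1 ≤ s →
      0 ≤ (2 - p) * (p + 1) * (p * s ^ (p - 1)) + p * (p - 1) * ((p - 1) * s ^ (p - 2))
        - p * (3 - p) := by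
    intro s hs
    have hs0 : (0 : ℝ) < s := lt_of_lt_of_le one_pos hs
    have hb := bern_aux (q := 2 - p) (by linarith) (by linarith) hs0.le
    have hb' : (3 - p) * s ^ (2 - p) ≤ (3 - p) * (1 + (2 - p) * (s - 1)) :=
      mul_le_mul_of_nonneg_left hb (by linarith)
    have h2' : 0 ≤ ((2 - p) * (2 * p - 2)) * (s - 1) :=
      mul_nonneg (mul_nonneg (by linarith) (by linarith)) (by linarith)
    have hkey : (3 - p) * s ^ (2 - p) ≤ (2 - p) * (p + 1) * s + (p - 1) ^ 2 := by
      nlinarith [hb', h2']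
    have e1 : s ^ (p - 1) * s ^ (2 - p) = s := by
      rw [← Real.rpow_add hs0]; norm_num
    have e2 : s ^ (p - 2) * s ^ (2 - p) = 1 := by
      rw [← Real.rpow_add hs0]; norm_num
    have hsp : 0 < s ^ (2 - p) := Real.rpow_pos_of_pos hs0 _
    have hmain : 0 ≤ ((2 - p) * (p + 1) * s ^ (p - 1) + (p - 1) ^ 2 * s ^ (p - 2) - (3 - p)) := by
      have hprod : 0 ≤ s ^ (2 - p) *
          ((2 - p) * (p + 1) * s ^ (p - 1) + (p - 1) ^ 2 * s ^ (p - 2) - (3 - p)) := by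
        have heq : s ^ (2 - p) *
            ((2 - p) * (p + 1) * s ^ (p - 1) + (p - 1) ^ 2 * s ^ (p - 2) - (3 - p))
            = (2 - p) * (p + 1) * s + (p - 1) ^ 2 - (3 - p) * s ^ (2 - p) := by
          nlinarith [e1, e2]
        rw [heq]; linarith
      exact nonneg_of_mul_nonneg_right hprod hsp
    nlinarith [hmain, hp1]
  -- F1 ≥ 0 on [1, ∞)
  have hF1mono : MonotoneOn F1 (Set.Ici 1) := by
    apply monotoneOn_of_deriv_nonneg (convex_Ici 1)
    · exact fun s hs => (hdF1 s (lt_of_lt_of_le one_pos hs)).continuousAt.continuousWithinAt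
    · intro s hs
      rw [interior_Ici] at hs
      exact (hdF1 s (lt_trans one_pos hs)).differentiableAt.differentiableWithinAt
    · intro s hs
      rw [interior_Ici] at hs
      rw [(hdF1 s (lt_trans one_pos hs)).deriv]
      exact hF2 s hs.le
  have hF1one : F1 1 = 0 := by
    simp [hF1, Real.one_rpow]; ring
  have hF1nonneg : ∀ s : ℝ, 1 ≤ s → 0 ≤ F1 s := by
    intro s hs
    have := hF1mono (Set.self_mem_Ici) hs hs
    rw [hF1one] at this; exact this
  -- F ≥ 0 on [1, ∞)
  have hFmono : MonotoneOn F (Set.Ici 1) := by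
    apply monotoneOn_of_deriv_nonneg (convex_Ici 1)
    · exact fun s hs => (hdF s (lt_of_lt_of_le one_pos hs)).continuousAt.continuousWithinAt
    · intro s hs
      rw [interior_Ici] at hs
      exact (hdF s (lt_trans one_pos hs)).differentiableAt.differentiableWithinAt
    · intro s hs
      rw [interior_Ici] at hs
      rw [(hdF s (lt_trans one_pos hs)).deriv]
      exact hF1nonneg s hs.le
  have hFone : F 1 = 0 := by
    simp [hF, Real.one_rpow]; ring
  have hFt : 0 ≤ F t := by
    have := hFmono (Set.self_mem_Ici) ht ht
    rw [hFone] at this; exact this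
  -- unfold F t
  have htp1 : t ^ (p + 1) = t ^ p * t := Real.rpow_add_one (ne_of_gt ht0) p
  have hexp : F t = ((2 - p) * t + (p - 1)) * (t ^ p - 1 - (p / 2) * (t ^ 2 - 1))
      - (p * (p - 2) / 2) * t * (t - 1) ^ 2 := by
    simp only [hF]; rw [htp1]; ring
  have hq : ((2 - p) * t + (p - 1)) * (t ^ p - 1 - (p / 2) * (t ^ 2 - 1)
      - (p * (p - 2) / 2) * (t / ((2 - p) * t + (p - 1))) * (t - 1) ^ 2)
      = F t := by
    rw [hexp]; field_simp
  have := nonneg_of_mul_nonneg_right (le_of_le_of_eq hFt hq.symm) hDt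
  linarith

theorem stmt_4 (n : ℕ) (p : ℝ) (hp1 : 1 < p) (hp2 : p < 2)
    (x y : EuclideanSpace ℝ (Fin n)) (hx : x ≠ 0)
    (w : EuclideanSpace ℝ (Fin n))
    (hw : w = if ‖x‖ < ‖x + y‖ then
                (‖x + y‖ / ((2 - p) * ‖x + y‖ + (p - 1) * ‖x‖)) ^ (1 / (p - 2)) • x
              else x) :
    ‖x + y‖ ^ p ≥ ‖x‖ ^ p + p * ‖x‖ ^ (p - 2) * ⟪x, y⟫
      + (1 / 2) * (p * ‖x‖ ^ (p - 2) * ‖y‖ ^ 2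
          + p * (p - 2) * ‖w‖ ^ (p - 2) * (‖x‖ - ‖x + y‖) ^ 2) := by
  set a := ‖x‖ with haa
  set b := ‖x + y‖ with hbb
  have ha : 0 < a := by simpa [haa] using norm_pos_iff.mpr hx
  have hb : 0 ≤ b := norm_nonneg _
  have hinner : ⟪x, y⟫ = (b ^ 2 - a ^ 2 - ‖y‖ ^ 2) / 2 := by
    have := norm_add_sq_real x y
    rw [← haa, ← hbb] at this; linarith
  -- basic rpow facts
  have hap : a ^ (p - 2) * a ^ 2 = a ^ p := by
    have h2 : a ^ (2 : ℕ) = a ^ ((2 : ℕ) : ℝ) := (Real.rpow_natCast a 2).symm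
    rw [h2, ← Real.rpow_add ha]; norm_num
  set t := b / a with htdef
  have hbt : b = a * t := by rw [htdef]; field_simp
  have ht0 : 0 ≤ t := div_nonneg hb ha.le
  have hbp : b ^ p = a ^ p * t ^ p := by
    rw [hbt, Real.mul_rpow ha.le ht0]
  have hapos : 0 < a ^ p := Real.rpow_pos_of_pos ha p
  have e1 : a ^ (p - 2) * (b ^ 2 - a ^ 2) = a ^ p * (t ^ 2 - 1) := by
    rw [hbt, ← hap]; ring
  have e2 : a ^ (p - 2) * (a - b) ^ 2 = a ^ p * (t - 1) ^ 2 := by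
    rw [hbt, ← hap]; ring
  rw [ge_iff_le, hinner]
  by_cases hcase : a < b
  · -- t > 1
    have ht1 : 1 < t := by
      rw [htdef]; exact (one_lt_div ha).mpr hcase
    have hDt : 0 < (2 - p) * t + (p - 1) := by nlinarith
    have hDb : 0 < (2 - p) * b + (p - 1) * a := by nlinarith
    set c := b / ((2 - p) * b + (p - 1) * a) with hcdef
    have hc0 : 0 ≤ c := div_nonneg hb hDb.le
    have hwx : w = c ^ (1 / (p - 2)) • x := by
      rw [hw, if_pos hcase]
    have hnw : ‖w‖ = c ^ (1 / (p - 2)) * a := by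
      rw [hwx, norm_smul, Real.norm_eq_abs,
        abs_of_nonneg (Real.rpow_nonneg hc0 _), haa]
    have hwp : ‖w‖ ^ (p - 2) = c * a ^ (p - 2) := by
      rw [hnw, Real.mul_rpow (Real.rpow_nonneg hc0 _) ha.le]
      congr 1
      rw [← Real.rpow_mul hc0, one_div, inv_mul_cancel₀ (show p - 2 ≠ 0 by linarith),
        Real.rpow_one]
    have hct : c = t / ((2 - p) * t + (p - 1)) := by
      rw [hcdef, hbt, show (2 - p) * (a * t) + (p - 1) * a = a * ((2 - p) * t + (p - 1)) by ring,
        mul_div_mul_left _ _ (ne_of_gt ha)]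
    have hkey := caseB p hp1 hp2 ht1.le
    rw [hwp, hct]
    have expand : a ^ p + p * a ^ (p - 2) * ((b ^ 2 - a ^ 2 - ‖y‖ ^ 2) / 2)
        + 1 / 2 * (p * a ^ (p - 2) * ‖y‖ ^ 2
          + p * (p - 2) * (t / ((2 - p) * t + (p - 1)) * a ^ (p - 2)) * (a - b) ^ 2)
        = a ^ p * (1 + (p / 2) * (t ^ 2 - 1)
            + (p * (p - 2) / 2) * (t / ((2 - p) * t + (p - 1))) * (t - 1) ^ 2) := by
      linear_combination (p / 2) * e1
        + (p * (p - 2) / 2) * (t / ((2 - p) * t + (p - 1))) * e2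
    rw [expand, hbp]
    exact mul_le_mul_of_nonneg_left hkey hapos.le
  · -- t ≤ 1
    have ht1 : t ≤ 1 := by
      rw [htdef]; exact (div_le_one ha).mpr (not_lt.mp hcase)
    have hwx : w = x := by rw [hw, if_neg hcase]
    have hwp : ‖w‖ ^ (p - 2) = a ^ (p - 2) := by rw [hwx, haa]
    have hkey := caseA p hp1 hp2 ht0 ht1
    rw [hwp]
    have expand : a ^ p + p * a ^ (p - 2) * ((b ^ 2 - a ^ 2 - ‖y‖ ^ 2) / 2)
        + 1 / 2 * (p * a ^ (p - 2) * ‖y‖ ^ 2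
          + p * (p - 2) * a ^ (p - 2) * (a - b) ^ 2)
        = a ^ p * (1 + (p / 2) * (t ^ 2 - 1) + (p * (p - 2) / 2) * (t - 1) ^ 2) := by
      linear_combination (p / 2) * e1 + (p * (p - 2) / 2) * e2
    rw [expand, hbp]
    exact mul_le_mul_of_nonneg_left hkey hapos.le
end

section
/- Let 1 < p < 2 and x, y ∈ ℝⁿ with x ≠ 0. Define w as follows: w = ((|x+y|)/((2-p)|x+y| + (p-1)|x|))^{1/(p-2)} x if |x| < |x+y|, and w = x if |x+y| ≤ |x|. Then the quantity G(x,y) := p|x|^{p-2}|y|^2 + p(p-2)|w|^{p-2}(|x| - |x+y|)^2 satisfies G(x,y) ≥ c(p) (|x|/(|x|+|y|)) |x|^{p-2} |y|^2 for some constant c(p) > 0 depending only on p; in particular one may take c(p) = p(p-1)/(2-p+1) or any constant for which the inequality holds. -/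
open Real

lemma key_arith (p a b t : ℝ) (hp1 : 1 < p) (hp2 : p < 2) (ha : 0 < a)
    (ht : 0 ≤ t) (h1 : (a-b)^2 ≤ t^2) (h2 : b ≤ a + t) (hab : a < b) :
    p*(p-1)*(a/(a+t))*t^2 ≤ p*t^2 + p*(p-2)*(b/((2-p)*b+(p-1)*a))*(a-b)^2 := by
  set D := (2-p)*b+(p-1)*a with hDdef
  have hD : 0 < D := by nlinarith
  have hat : 0 < a + t := by linarith
  have hDat : D ≤ a + t := by nlinarith
  have hq : 0 ≤ b/D := div_nonneg (by linarith) hD.le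
  have step1 : a/(a+t) ≤ a/D := by gcongr
  have e : p*t^2 + p*(p-2)*(b/D)*(a-b)^2 - p*(p-1)*(a/D)*t^2
      = p*(2-p)*(b/D)*(t^2-(a-b)^2) := by
    field_simp
    ring
  have h3 : 0 ≤ p*(2-p)*(b/D)*(t^2-(a-b)^2) := by
    have := mul_nonneg (mul_nonneg (mul_nonneg (by linarith : (0:ℝ) ≤ p) (by linarith : (0:ℝ) ≤ 2-p)) hq) (by linarith : (0:ℝ) ≤ t^2-(a-b)^2)
    linarith
  have hpt : (0:ℝ) ≤ p*(p-1)*t^2 := mul_nonneg (mul_nonneg (by linarith) (by linarith)) (sq_nonneg t)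
  nlinarith [mul_le_mul_of_nonneg_left step1 hpt]

theorem stmt_5 (p : ℝ) (hp1 : 1 < p) (hp2 : p < 2) :
    ∃ c : ℝ, 0 < c ∧
      ∀ (n : ℕ) (x y : EuclideanSpace ℝ (Fin n)), x ≠ 0 →
        ∀ w : EuclideanSpace ℝ (Fin n),
          w = (if ‖x‖ < ‖x + y‖ then
                (‖x + y‖ / ((2 - p) * ‖x + y‖ + (p - 1) * ‖x‖)) ^ (1 / (p - 2)) • x
              else x) →
          p * ‖x‖ ^ (p - 2) * ‖y‖ ^ 2
            + p * (p - 2) * ‖w‖ ^ (p - 2) * (‖x‖ - ‖x + y‖) ^ 2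
            ≥ c * (‖x‖ / (‖x‖ + ‖y‖)) * ‖x‖ ^ (p - 2) * ‖y‖ ^ 2 := by
  refine ⟨p * (p - 1), by nlinarith, ?_⟩
  intro n x y hx w hw
  have ha : 0 < ‖x‖ := norm_pos_iff.mpr hx
  have ht : (0:ℝ) ≤ ‖y‖ := norm_nonneg _
  have hub : ‖x + y‖ ≤ ‖x‖ + ‖y‖ := norm_add_le x y
  have hlb : ‖x‖ - ‖y‖ ≤ ‖x + y‖ := by
    have hxe : x = (x + y) - y := by abel
    calc ‖x‖ - ‖y‖ = ‖(x+y) - y‖ - ‖y‖ := by rw [← hxe]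
    _ ≤ (‖x+y‖ + ‖y‖) - ‖y‖ := by linarith [norm_sub_le (x+y) y]
    _ = ‖x+y‖ := by ring
  have h1 : (‖x‖ - ‖x + y‖)^2 ≤ ‖y‖^2 := by nlinarith
  have hap : (0:ℝ) < ‖x‖ ^ (p-2) := Real.rpow_pos_of_pos ha _
  by_cases hab : ‖x‖ < ‖x + y‖
  · rw [if_pos hab] at hw
    set D := (2-p)*‖x+y‖+(p-1)*‖x‖ with hDdef
    have hD : 0 < D := by nlinarith
    have hq : 0 < ‖x+y‖ / D := div_pos (by linarith) hD
    have hnw : ‖w‖ = (‖x+y‖/D) ^ (1/(p-2)) * ‖x‖ := by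
      rw [hw, norm_smul, Real.norm_eq_abs, abs_of_nonneg (Real.rpow_nonneg hq.le _)]
    have hwp : ‖w‖ ^ (p-2) = (‖x+y‖/D) * ‖x‖ ^ (p-2) := by
      rw [hnw, Real.mul_rpow (Real.rpow_nonneg hq.le _) ha.le,
        ← Real.rpow_mul hq.le, one_div_mul_cancel (sub_ne_zero.mpr (by linarith : p ≠ 2)),
        Real.rpow_one]
    rw [hwp]
    have key := key_arith p ‖x‖ ‖x+y‖ ‖y‖ hp1 hp2 ha ht h1 hub hab
    rw [← hDdef] at key
    nlinarith [mul_le_mul_of_nonneg_right key hap.le]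
  · rw [if_neg hab] at hw
    have hwp : ‖w‖ ^ (p-2) = ‖x‖ ^ (p-2) := by rw [hw]
    rw [hwp]
    have key : p*(p-1)*(‖x‖/(‖x‖+‖y‖))*‖y‖^2 ≤ p*‖y‖^2 + p*(p-2)*(‖x‖-‖x+y‖)^2 := by
      have hat : 0 < ‖x‖ + ‖y‖ := by linarith
      have hle : ‖x‖/(‖x‖+‖y‖) ≤ 1 := by
        rw [div_le_one hat]; linarith
      have hpt : (0:ℝ) ≤ p*(p-1)*‖y‖^2 := mul_nonneg (mul_nonneg (by linarith) (by linarith)) (sq_nonneg _)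
      have hp2p : (0:ℝ) ≤ p*(2-p) := mul_nonneg (by linarith) (by linarith)
      nlinarith [mul_le_mul_of_nonneg_left hle hpt, mul_le_mul_of_nonneg_left h1 hp2p]
    nlinarith [mul_le_mul_of_nonneg_right key hap.le]
end

section
/- For any n ≥ 2, 1 < p < n with p* := np/(n-p) ≤ 2, and any κ > 0, there exists C₁ = C₁(p*, κ) > 0 such that for every a, b ∈ ℝ with a ≠ 0: |a+b|^{p*} ≤ |a|^{p*} + p*|a|^{p*-2} a b + ( p*(p*-1)/2 + κ ) · ( (|a| + C₁|b|)^{p*} / (a² + b²) ) b². -/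
open Real Set

lemma stmt7_aux_hasDeriv (q : ℝ) (hq1 : 1 ≤ q) (t : ℝ) :
    HasDerivAt (fun t : ℝ => (1 + t) ^ q) (q * (1 + t) ^ (q - 1)) t := by
  have h1 : HasDerivAt (fun t : ℝ => 1 + t) 1 t := (hasDerivAt_id t).const_add 1
  have h2 := (Real.hasDerivAt_rpow_const (x := 1 + t) (p := q) (Or.inr hq1)).comp t h1
  rw [mul_one] at h2; exact h2

lemma stmt7_core_small (q : ℝ) (hq1 : 1 < q) (hq2 : q ≤ 2) (δ : ℝ) (hδ0 : 0 < δ) (hδ1 : δ ≤ 1/2) :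
    ∀ t ∈ Icc (-δ) δ, (1 + t) ^ q ≤ 1 + q * t + (q * (q - 1) / (2 * (1 - δ))) * t ^ 2 := by
  have h1δ : 0 < 1 - δ := by linarith
  set K : ℝ := q * (q - 1) / (2 * (1 - δ)) with hK
  have hKnn : 0 ≤ K := by
    rw [hK]; apply div_nonneg (mul_nonneg (by linarith) (by linarith)) (by linarith)
  have h2K : 2 * K * (1 - δ) = q * (q - 1) := by rw [hK]; field_simp
  have hKq : q * (q - 1) ≤ 2 * K := by nlinarith
  set f : ℝ → ℝ := fun t => 1 + q * t + K * t ^ 2 - (1 + t) ^ q with hf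
  have hder : ∀ t : ℝ, HasDerivAt f (q + K * (2 * t) - q * (1 + t) ^ (q - 1)) t := by
    intro t
    have h1 : HasDerivAt (fun t : ℝ => 1 + q * t) q t := by
      simpa using ((hasDerivAt_id t).const_mul q).const_add 1
    have h2 : HasDerivAt (fun t : ℝ => K * t ^ 2) (K * (2 * t)) t := by
      simpa using (hasDerivAt_pow 2 t).const_mul K
    exact ((h1.add h2).sub (stmt7_aux_hasDeriv q hq1.le t))
  have hcont : Continuous f := by
    rw [continuous_iff_continuousAt]
    exact fun t => (hder t).differentiableAt.continuousAt
  have hdiff : ∀ s : Set ℝ, DifferentiableOn ℝ f s :=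
    fun s => fun t _ => (hder t).differentiableAt.differentiableWithinAt
  have hderiv : ∀ t : ℝ, deriv f t = q + K * (2 * t) - q * (1 + t) ^ (q - 1) :=
    fun t => (hder t).deriv
  -- monotone on [0, δ]
  have hmono : MonotoneOn f (Icc 0 δ) := by
    apply monotoneOn_of_deriv_nonneg (convex_Icc 0 δ) hcont.continuousOn (hdiff _)
    intro t ht
    rw [interior_Icc] at ht
    rw [hderiv]
    have hbern : (1 + t) ^ (q - 1) ≤ 1 + (q - 1) * t :=
      rpow_one_add_le_one_add_mul_self (by linarith [ht.1]) (by linarith) (by linarith)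
    nlinarith [ht.1, mul_le_mul_of_nonneg_left hbern (by linarith : (0:ℝ) ≤ q)]
  -- antitone on [-δ, 0]
  have hanti : AntitoneOn f (Icc (-δ) 0) := by
    apply antitoneOn_of_deriv_nonpos (convex_Icc (-δ) 0) hcont.continuousOn (hdiff _)
    intro t ht
    rw [interior_Icc] at ht
    obtain ⟨ht1, ht2⟩ := ht
    have htpos : 0 < 1 + t := by linarith
    rw [hderiv]
    have hb : (1 + t) ^ (2 - q) ≤ 1 + (2 - q) * t :=
      rpow_one_add_le_one_add_mul_self (by linarith) (by linarith) (by linarith)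
    have hrp : 0 < (1 + t) ^ (2 - q) := rpow_pos_of_pos htpos _
    have hpos2 : 0 < 1 + (2 - q) * t := lt_of_lt_of_le hrp hb
    have hid : (1 + t) ^ (q - 1) = (1 + t) / (1 + t) ^ (2 - q) := by
      rw [eq_div_iff (ne_of_gt hrp), ← Real.rpow_add htpos]
      have : q - 1 + (2 - q) = 1 := by ring
      rw [this, Real.rpow_one]
    have hlow : (1 + t) / (1 + (2 - q) * t) ≤ (1 + t) ^ (q - 1) := by
      rw [hid]
      exact div_le_div_of_nonneg_left (by linarith) hrp hb
    have h2 : 0 ≤ δ + (2 - q) * t := by nlinarith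
    have key : q * (1 + t) - (q + 2 * K * t) * (1 + (2 - q) * t)
        = (q * (q - 1) / (1 - δ)) * (-t) * (δ + (2 - q) * t) := by
      rw [hK]; field_simp; ring
    have hnn : 0 ≤ (q * (q - 1) / (1 - δ)) * (-t) * (δ + (2 - q) * t) := by
      apply mul_nonneg (mul_nonneg (div_nonneg (mul_nonneg (by linarith) (by linarith)) (by linarith)) (by linarith)) h2
    have hpoly : (q + 2 * K * t) * (1 + (2 - q) * t) ≤ q * (1 + t) := by linarith
    have hstep : q + 2 * K * t ≤ q * (1 + t) / (1 + (2 - q) * t) :=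
      (le_div_iff₀ hpos2).mpr hpoly
    have hstep2 : q * (1 + t) / (1 + (2 - q) * t) ≤ q * (1 + t) ^ (q - 1) := by
      rw [mul_div_assoc]
      exact mul_le_mul_of_nonneg_left hlow (by linarith)
    linarith
  intro t ht
  have hf0 : f 0 = 0 := by simp [hf, Real.one_rpow]
  have hge : f 0 ≤ f t := by
    rcases le_total t 0 with h | h
    · exact hanti ⟨ht.1, h⟩ ⟨by linarith, le_refl 0⟩ h
    · exact hmono ⟨le_refl 0, by linarith⟩ ⟨h, ht.2⟩ h
  rw [hf0] at hge
  simp only [hf] at hge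
  linarith

lemma stmt7_scalar (q κ : ℝ) (hq1 : 1 < q) (hq2 : q ≤ 2) (hκ : 0 < κ) :
    ∃ C : ℝ, 1 ≤ C ∧ ∀ t : ℝ,
      |1 + t| ^ q ≤ 1 + q * t
        + (q * (q - 1) / 2 + κ) * ((1 + C * |t|) ^ q / (1 + t ^ 2)) * t ^ 2 := by
  have hqq : 0 < q * (q - 1) := mul_pos (by linarith) (by linarith)
  have hqq2 : q * (q - 1) ≤ 2 := by nlinarith
  obtain ⟨M, hM, hM0⟩ : ∃ M : ℝ, M = q * (q - 1) / 2 + κ ∧ 0 < M :=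
    ⟨_, rfl, by positivity⟩
  obtain ⟨δ, hδ0, hδh, hδκ⟩ : ∃ δ : ℝ, 0 < δ ∧ δ ≤ 1/2 ∧ δ ≤ κ/3 :=
    ⟨min (1/2) (κ/3), lt_min (by norm_num) (by linarith), min_le_left _ _, min_le_right _ _⟩
  obtain ⟨B, hB, hB0⟩ : ∃ B : ℝ, B = 3 + 1/δ ∧ 0 < B := ⟨_, rfl, by positivity⟩
  obtain ⟨lam, hlamval, hlam1⟩ : ∃ lam : ℝ, lam = 1 + 2*B/(M*δ^2) ∧ 1 ≤ lam :=
    ⟨_, rfl, by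
      have h : (0:ℝ) ≤ 2*B/(M*δ^2) := by positivity
      linarith⟩
  obtain ⟨C, hCval, hC0⟩ : ∃ C : ℝ, C = (2/δ) * lam ∧ 0 < C :=
    ⟨_, rfl, by positivity⟩
  have hCδ : C * δ / 2 = lam := by rw [hCval]; field_simp
  have hC1 : 1 ≤ C := by
    have h1 : 2/δ ≤ C := by
      rw [hCval]; exact le_mul_of_one_le_right (by positivity) hlam1
    have h2 : (4:ℝ) ≤ 2/δ := by rw [le_div_iff₀ hδ0]; linarith
    linarith
  have hlamB : B ≤ M * lam * δ^2 / 2 := by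
    have h1 : M * lam * δ^2 / 2 = M*δ^2/2 + B := by
      rw [hlamval]; field_simp
    have h2 : 0 < M * δ^2 := mul_pos hM0 (by positivity)
    linarith [h2]
  refine ⟨C, hC1, fun t => ?_⟩
  have htsq : (0:ℝ) < 1 + t^2 := by positivity
  have hCabs : (1:ℝ) ≤ 1 + C * |t| := by
    have := mul_nonneg hC0.le (abs_nonneg t); linarith
  rw [← hM]
  rcases le_or_gt |t| δ with hcase | hcase
  · -- small t
    have habs := abs_le.mp hcase
    have h1t : 0 < 1 + t := by linarith
    have hkey := stmt7_core_small q hq1 hq2 δ hδ0 hδh t ⟨habs.1, habs.2⟩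
    obtain ⟨K, hK, hKnn⟩ : ∃ K : ℝ, K = q * (q - 1) / (2 * (1 - δ)) ∧ 0 ≤ K :=
      ⟨_, rfl, div_nonneg hqq.le (by linarith)⟩
    rw [← hK] at hkey
    have h1δ : (0:ℝ) < 1 - δ := by linarith
    have hKM : K * (1 + δ^2) ≤ M := by
      rw [hK, hM, div_mul_eq_mul_div, div_le_iff₀ (by linarith)]
      have a1 : δ^2 ≤ δ/2 := by linarith [mul_le_mul_of_nonneg_left hδh hδ0.le]
      have a2 : q*(q-1)*(δ + δ^2) ≤ 2*(δ+δ^2) :=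
        mul_le_mul_of_nonneg_right hqq2 (by positivity)
      have a5 : κ ≤ 2*κ*(1-δ) := by linarith [mul_nonneg hκ.le (by linarith : (0:ℝ) ≤ 1-2*δ)]
      linarith [a1, a2, a5, hδκ]
    have ht2 : t^2 ≤ δ^2 := by
      have h := mul_le_mul hcase hcase (abs_nonneg t) hδ0.le
      rw [abs_mul_abs_self] at h
      have e1 : t^2 = t*t := pow_two t
      have e2 : δ^2 = δ*δ := pow_two δ
      linarith
    have hKM2 : K * (1 + t^2) ≤ M * (1 + C*|t|)^q := by
      have e1 : K * (1 + t^2) ≤ K * (1 + δ^2) :=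
        mul_le_mul_of_nonneg_left (by linarith) hKnn
      have e2 : (1:ℝ) ≤ (1 + C*|t|)^q := by
        have h := Real.rpow_le_rpow (by norm_num : (0:ℝ) ≤ 1) hCabs (by linarith : (0:ℝ) ≤ q)
        rwa [Real.one_rpow] at h
      have e3 : M ≤ M * (1 + C*|t|)^q := le_mul_of_one_le_right hM0.le e2
      linarith
    have hthird : K * t^2 ≤ M * ((1 + C*|t|)^q / (1 + t^2)) * t^2 := by
      have e3 : K ≤ M * (1 + C*|t|)^q / (1 + t^2) := (le_div_iff₀ htsq).mpr hKM2
      have e4 := mul_le_mul_of_nonneg_right e3 (sq_nonneg t)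
      calc K * t^2 ≤ M * (1 + C*|t|)^q / (1+t^2) * t^2 := e4
        _ = M * ((1 + C*|t|)^q / (1 + t^2)) * t^2 := by ring
    have habs1 : |1 + t| = 1 + t := abs_of_pos h1t
    rw [habs1]
    linarith
  · -- large t
    have hs0 : 0 < |t| := lt_of_lt_of_le hδ0 hcase.le
    have hδs : δ ≤ |t| := hcase.le
    obtain ⟨P, hP, hP0⟩ : ∃ P : ℝ, P = (1 + |t|)^q ∧ 0 < P :=
      ⟨_, rfl, by positivity⟩
    have h1sP : 1 + |t| ≤ P := by
      rw [hP]
      have h := Real.rpow_le_rpow_of_exponent_le (by linarith : (1:ℝ) ≤ 1 + |t|) hq1.le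
      rwa [Real.rpow_one] at h
    have hi : |1 + t|^q ≤ P := by
      rw [hP]
      apply Real.rpow_le_rpow (abs_nonneg _) _ (by linarith)
      calc |1 + t| ≤ |(1:ℝ)| + |t| := abs_add_le 1 t
        _ = 1 + |t| := by rw [abs_one]
    have hii : -(q*t) ≤ 2*|t| := by
      have h1 : |q*t| ≤ 2*|t| := by
        rw [abs_mul, abs_of_pos (by linarith : (0:ℝ) < q)]
        have := mul_le_mul_of_nonneg_right hq2 (abs_nonneg t)
        linarith
      linarith [neg_abs_le (q*t)]
    have hiii : 1 + 2*|t| ≤ (1/δ + 2) * |t| := by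
      have h1 : 1 ≤ |t|/δ := (le_div_iff₀ hδ0).mpr (by linarith)
      have h2 : |t|/δ = (1/δ)*|t| := by ring
      linarith
    have hLHS : |1 + t|^q - 1 - q*t ≤ B * P := by
      have e1 : (1/δ + 2)*|t| ≤ (1/δ + 2)*(1+|t|) := by
        apply mul_le_mul_of_nonneg_left (by linarith) (by positivity)
      have e2 : (1/δ + 2)*(1+|t|) ≤ (1/δ + 2)*P := by
        apply mul_le_mul_of_nonneg_left h1sP (by positivity)
      have e3 : B * P = P + (1/δ + 2)*P := by rw [hB]; ring
      linarith
    have hlp : lam * (1+|t|) ≤ 1 + C*|t| := by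
      have h1 : C*δ/2 ≤ C*|t|/2 := by
        have := mul_le_mul_of_nonneg_left hδs hC0.le; linarith
      have h2 : C*δ*|t|/2 ≤ C*|t|/2 := by
        have e1 := mul_le_mul_of_nonneg_right
          (mul_le_mul_of_nonneg_left hδh hC0.le) (abs_nonneg t)
        have e2 := mul_nonneg hC0.le (abs_nonneg t)
        linarith [e1, e2]
      have h3 : lam*(1+|t|) = C*δ/2 + C*δ*|t|/2 := by rw [← hCδ]; ring
      linarith
    have hlP : lam * P ≤ (1 + C*|t|)^q := by
      have e1 : (lam*(1+|t|))^q ≤ (1+C*|t|)^q :=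
        Real.rpow_le_rpow (by positivity) hlp (by linarith)
      have e2 : (lam*(1+|t|))^q = lam^q * P := by
        rw [hP, Real.mul_rpow (by linarith) (by positivity)]
      have e3 : lam ≤ lam^q := by
        have h := Real.rpow_le_rpow_of_exponent_le hlam1 hq1.le
        rwa [Real.rpow_one] at h
      have e4 : lam * P ≤ lam^q * P := mul_le_mul_of_nonneg_right e3 hP0.le
      linarith
    have hfrac : δ^2/2 ≤ t^2/(1+t^2) := by
      rw [div_le_div_iff₀ (by norm_num) htsq]
      have h1 : δ^2 ≤ t^2 := by
        have h := mul_le_mul hδs hδs hδ0.le (abs_nonneg t)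
        rw [abs_mul_abs_self] at h
        have e1 : t^2 = t*t := pow_two t
        have e2 : δ^2 = δ*δ := pow_two δ
        linarith
      have h2 : δ^2 ≤ 1 := by linarith [mul_le_mul hδh hδh hδ0.le (by norm_num : (0:ℝ) ≤ 1/2)]
      have h3 := mul_le_mul_of_nonneg_right h2 (sq_nonneg t)
      linarith [h1, h3]
    have hprod : (lam*P) * (δ^2/2) ≤ (1+C*|t|)^q * (t^2/(1+t^2)) :=
      mul_le_mul hlP hfrac (by positivity) (by positivity)
    have hthird : B * P ≤ M * ((1 + C*|t|)^q / (1 + t^2)) * t^2 := by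
      have e1 : M * ((lam*P) * (δ^2/2)) ≤ M * ((1+C*|t|)^q * (t^2/(1+t^2))) :=
        mul_le_mul_of_nonneg_left hprod hM0.le
      have e2 : M * ((lam*P) * (δ^2/2)) = (M * lam * δ^2/2) * P := by ring
      have e3 : M * ((1+C*|t|)^q * (t^2/(1+t^2))) = M * ((1 + C*|t|)^q / (1 + t^2)) * t^2 := by
        ring
      have e4 : B * P ≤ (M * lam * δ^2/2) * P :=
        mul_le_mul_of_nonneg_right hlamB hP0.le
      linarith
    linarith

theorem stmt_7 (n : ℕ) (hn : 2 ≤ n) (p : ℝ) (hp1 : 1 < p) (hpn : p < n)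
    (q : ℝ) (hq : q = n * p / (n - p)) (hq2 : q ≤ 2)
    (κ : ℝ) (hκ : 0 < κ) :
    ∃ C₁ : ℝ, 0 < C₁ ∧ ∀ a b : ℝ, a ≠ 0 →
      |a + b| ^ q ≤ |a| ^ q + q * |a| ^ (q - 2) * a * b
        + (q * (q - 1) / 2 + κ) * ((|a| + C₁ * |b|) ^ q / (a ^ 2 + b ^ 2)) * b ^ 2 := by
  have hn2 : (2:ℝ) ≤ (n:ℝ) := by exact_mod_cast hn
  have hnp : 0 < (n:ℝ) - p := by linarith
  have hq1 : 1 < q := by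
    rw [hq, lt_div_iff₀ hnp]
    have hprod : (0:ℝ) < (n:ℝ) * (p - 1) :=
      mul_pos (by linarith) (by linarith)
    nlinarith [hprod]
  obtain ⟨C, hC1, hCkey⟩ := stmt7_scalar q κ hq1 hq2 hκ
  refine ⟨C, by linarith, fun a b ha => ?_⟩
  have hA : 0 < |a| := abs_pos.mpr ha
  have hAq : 0 < |a| ^ q := Real.rpow_pos_of_pos hA q
  have ha2 : (0:ℝ) < a ^ 2 := by positivity
  have hab2 : (0:ℝ) < a ^ 2 + b ^ 2 := by positivity
  set t : ℝ := b / a with ht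
  have key := hCkey t
  have hmul := mul_le_mul_of_nonneg_left key hAq.le
  have E1 : |a| ^ q * |1 + t| ^ q = |a + b| ^ q := by
    rw [← Real.mul_rpow (abs_nonneg a) (abs_nonneg _), ← abs_mul]
    have : a * (1 + t) = a + b := by rw [ht]; field_simp
    rw [this]
  have E2 : |a| ^ q * (q * t) = q * |a| ^ (q - 2) * a * b := by
    have h2 : |a| ^ q = |a| ^ (q - 2) * a ^ 2 := by
      rw [← sq_abs, ← Real.rpow_natCast |a| 2, ← Real.rpow_add hA]
      norm_num
    rw [h2, ht]
    field_simp
  have E3 : |a| ^ q * ((q * (q - 1) / 2 + κ) * ((1 + C * |t|) ^ q / (1 + t ^ 2)) * t ^ 2)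
      = (q * (q - 1) / 2 + κ) * ((|a| + C * |b|) ^ q / (a ^ 2 + b ^ 2)) * b ^ 2 := by
    have h3 : (|a| + C * |b|) ^ q = |a| ^ q * (1 + C * |t|) ^ q := by
      rw [← Real.mul_rpow (abs_nonneg a) (by positivity)]
      congr 1
      rw [ht, abs_div]
      field_simp
    have h4 : 1 + t ^ 2 = (a ^ 2 + b ^ 2) / a ^ 2 := by
      rw [ht]; field_simp
    have h5 : t ^ 2 = b ^ 2 / a ^ 2 := by rw [ht, div_pow]
    rw [h3, h4, h5]
    field_simp
  have expand : |a| ^ q * (1 + q * t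
      + (q * (q - 1) / 2 + κ) * ((1 + C * |t|) ^ q / (1 + t ^ 2)) * t ^ 2)
      = |a| ^ q + |a| ^ q * (q * t)
        + |a| ^ q * ((q * (q - 1) / 2 + κ) * ((1 + C * |t|) ^ q / (1 + t ^ 2)) * t ^ 2) := by
    ring
  rw [expand] at hmul
  linarith [hmul, E1, E2, E3]
end

section
/- Let q > 2 and let κ > 0. Then there exists C₁ = C₁(q, κ) > 0 such that for every a, b ∈ ℝ with a ≠ 0: |a+b|^q ≤ |a|^q + q|a|^{q-2} a b + ( q(q-1)/2 + κ ) |a|^{q-2} b² + C₁ |b|^q. -/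
open Set

theorem taylor_aux (q K ε : ℝ) (hq : 2 < q) (hε : 0 < ε) (hε2 : ε ≤ 1/2)
    (hK : q * (q - 1) * (1 + ε) ^ (q - 2) ≤ 2 * K) :
    ∀ t ∈ Set.Icc (-ε) ε, (1 + t) ^ q ≤ 1 + q * t + K * t ^ 2 := by
  have hq0 : 0 < q := by linarith
  set g : ℝ → ℝ := fun t => 1 + q * t + K * t ^ 2 - (1 + t) ^ q with hg_def
  set G : ℝ → ℝ := fun t => q + 2 * K * t - q * (1 + t) ^ (q - 1) with hG_def
  have hpos : ∀ t : ℝ, t ∈ Set.Icc (-ε) ε → (0:ℝ) < 1 + t := by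
    intro t ht
    have := ht.1
    linarith
  have h1d : ∀ t : ℝ, HasDerivAt (fun t : ℝ => 1 + t) 1 t := by
    intro t
    simpa using (hasDerivAt_id t).const_add (1:ℝ)
  have hgd : ∀ t : ℝ, 0 < 1 + t → HasDerivAt g (G t) t := by
    intro t ht
    have h2 : HasDerivAt (fun t : ℝ => (1 + t) ^ q) (q * (1 + t) ^ (q - 1) * 1) t :=
      (Real.hasDerivAt_rpow_const (p := q) (Or.inl ht.ne')).comp t (h1d t)
    have h3 : HasDerivAt (fun t : ℝ => 1 + q * t + K * t ^ 2)
        (q * 1 + K * (↑2 * t ^ (2 - 1))) t :=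
      (((hasDerivAt_id t).const_mul q).const_add 1).add ((hasDerivAt_pow 2 t).const_mul K)
    have := h3.sub h2
    refine this.congr_deriv ?_
    push_cast
    ring
  have hGd : ∀ t : ℝ, 0 < 1 + t →
      HasDerivAt G (2 * K - q * ((q - 1) * (1 + t) ^ (q - 2))) t := by
    intro t ht
    have h2 : HasDerivAt (fun t : ℝ => (1 + t) ^ (q - 1))
        ((q - 1) * (1 + t) ^ (q - 1 - 1) * 1) t :=
      (Real.hasDerivAt_rpow_const (p := q - 1) (Or.inl ht.ne')).comp t (h1d t)
    have h3 : HasDerivAt (fun t : ℝ => q + 2 * K * t) (2 * K * 1) t :=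
      ((hasDerivAt_id t).const_mul (2 * K)).const_add q
    have := h3.sub (h2.const_mul q)
    refine this.congr_deriv ?_
    have : q - 1 - 1 = q - 2 := by ring
    rw [this]
    ring
  have hG0 : G 0 = 0 := by
    simp [hG_def, Real.one_rpow]
  have hg0 : g 0 = 0 := by
    simp [hg_def, Real.one_rpow]
  -- G is monotone on Icc (-ε) ε
  have hGmono : MonotoneOn G (Icc (-ε) ε) := by
    apply monotoneOn_of_deriv_nonneg (convex_Icc _ _)
    · exact fun t ht => ((hGd t (hpos t ht)).continuousAt).continuousWithinAt
    · intro t ht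
      rw [interior_Icc] at ht
      have ht' : t ∈ Icc (-ε) ε := Ioo_subset_Icc_self ht
      exact ((hGd t (hpos t ht')).differentiableAt).differentiableWithinAt
    · intro t ht
      rw [interior_Icc] at ht
      have ht' : t ∈ Icc (-ε) ε := Ioo_subset_Icc_self ht
      rw [(hGd t (hpos t ht')).deriv]
      have hrp : (1 + t) ^ (q - 2) ≤ (1 + ε) ^ (q - 2) :=
        Real.rpow_le_rpow (hpos t ht').le (by linarith [ht'.2]) (by linarith)
      have hq1 : (0:ℝ) ≤ q * (q - 1) := by nlinarith
      nlinarith [mul_le_mul_of_nonneg_left hrp hq1]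
  have hGnonneg : ∀ t ∈ Icc (0:ℝ) ε, 0 ≤ G t := by
    intro t ht
    have h0 : (0:ℝ) ∈ Icc (-ε) ε := ⟨by linarith, hε.le⟩
    have ht' : t ∈ Icc (-ε) ε := ⟨by linarith [ht.1], ht.2⟩
    have := hGmono h0 ht' ht.1
    linarith [hG0 ▸ this]
  have hGnonpos : ∀ t ∈ Icc (-ε) (0:ℝ), G t ≤ 0 := by
    intro t ht
    have h0 : (0:ℝ) ∈ Icc (-ε) ε := ⟨by linarith, hε.le⟩
    have ht' : t ∈ Icc (-ε) ε := ⟨ht.1, by linarith [ht.2]⟩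
    have := hGmono ht' h0 ht.2
    rw [hG0] at this
    exact this
  have hposIcc0 : ∀ t : ℝ, t ∈ Icc (0:ℝ) ε → 0 < 1 + t := by
    intro t ht
    linarith [ht.1]
  have hposIccneg : ∀ t : ℝ, t ∈ Icc (-ε) (0:ℝ) → 0 < 1 + t := by
    intro t ht
    linarith [ht.1]
  have hgmono : MonotoneOn g (Icc (0:ℝ) ε) := by
    apply monotoneOn_of_deriv_nonneg (convex_Icc _ _)
    · exact fun t ht => ((hgd t (hposIcc0 t ht)).continuousAt).continuousWithinAt
    · intro t ht
      rw [interior_Icc] at ht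
      exact ((hgd t (hposIcc0 t (Ioo_subset_Icc_self ht))).differentiableAt).differentiableWithinAt
    · intro t ht
      rw [interior_Icc] at ht
      have ht' := Ioo_subset_Icc_self ht
      rw [(hgd t (hposIcc0 t ht')).deriv]
      exact hGnonneg t ht'
  have hganti : AntitoneOn g (Icc (-ε) (0:ℝ)) := by
    apply antitoneOn_of_deriv_nonpos (convex_Icc _ _)
    · exact fun t ht => ((hgd t (hposIccneg t ht)).continuousAt).continuousWithinAt
    · intro t ht
      rw [interior_Icc] at ht
      exact ((hgd t (hposIccneg t (Ioo_subset_Icc_self ht))).differentiableAt).differentiableWithinAt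
    · intro t ht
      rw [interior_Icc] at ht
      have ht' := Ioo_subset_Icc_self ht
      rw [(hgd t (hposIccneg t ht')).deriv]
      exact hGnonpos t ht'
  intro t ht
  have hgt : 0 ≤ g t := by
    rcases le_total 0 t with h | h
    · have := hgmono (⟨le_refl 0, hε.le⟩ : (0:ℝ) ∈ Icc (0:ℝ) ε) ⟨h, ht.2⟩ h
      linarith [hg0 ▸ this]
    · have := hganti (⟨ht.1, h⟩ : t ∈ Icc (-ε) (0:ℝ)) ⟨by linarith, le_refl 0⟩ h
      rw [hg0] at this
      linarith
  simp only [hg_def] at hgt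
  linarith

theorem main_aux (q K ε : ℝ) (hq : 2 < q) (hKpos : 0 < K) (hε : 0 < ε) (hε2 : ε ≤ 1/2)
    (key : ∀ t ∈ Set.Icc (-ε) ε, (1 + t) ^ q ≤ 1 + q * t + K * t ^ 2) :
    ∀ a b : ℝ, a ≠ 0 →
      |a + b| ^ q ≤ |a| ^ q + q * |a| ^ (q - 2) * a * b
        + K * |a| ^ (q - 2) * b ^ 2 + ((1 + 1/ε) ^ q + q * ε ^ (1 - q)) * |b| ^ q := by
  have hq0 : (0:ℝ) < q := by linarith
  have key2 : ∀ a b : ℝ, 0 < a → |b| ≤ ε * a →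
      |a + b| ^ q ≤ |a| ^ q + q * |a| ^ (q - 2) * a * b + K * |a| ^ (q - 2) * b ^ 2 := by
    intro a b ha hb
    set t : ℝ := b / a with ht_def
    have habs : |t| ≤ ε := by
      rw [ht_def, abs_div, abs_of_pos ha, div_le_iff₀ ha]
      linarith [hb]
    have ht : t ∈ Set.Icc (-ε) ε := abs_le.1 habs
    have h1 := key t ht
    have hapos : 0 < 1 + t := by
      have h := ht.1
      linarith
    have hab : a + b = a * (1 + t) := by
      rw [ht_def]
      field_simp
    rw [hab, abs_mul, abs_of_pos ha, abs_of_pos hapos,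
      Real.mul_rpow ha.le hapos.le]
    have expand : a ^ q + q * a ^ (q - 2) * a * b + K * a ^ (q - 2) * b ^ 2
        = a ^ q * (1 + q * t + K * t ^ 2) := by
      have h2 : a ^ (q - 2) = a ^ q / a ^ (2:ℝ) := Real.rpow_sub ha q 2
      have h3 : a ^ (2:ℝ) = a ^ (2:ℕ) := by
        rw [← Real.rpow_natCast a 2]; norm_num
      rw [h2, h3, ht_def]
      field_simp
    rw [expand]
    exact mul_le_mul_of_nonneg_left h1 (Real.rpow_nonneg ha.le q)
  intro a b ha
  have haq : 0 < |a| := abs_pos.2 ha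
  rcases le_or_gt |b| (ε * |a|) with hb | hb
  · have main : |a + b| ^ q ≤ |a| ^ q + q * |a| ^ (q - 2) * a * b + K * |a| ^ (q - 2) * b ^ 2 := by
      rcases ha.lt_or_gt with hneg | hpos
      · have h := key2 (-a) (-b) (by linarith) (by rw [abs_neg, abs_of_neg hneg] at *; exact hb)
        have e1 : |(-a) + (-b)| = |a + b| := by rw [← neg_add]; exact abs_neg _
        have e2 : |(-a)| = |a| := abs_neg a
        rw [e1, e2] at h
        calc |a + b| ^ q ≤ |a| ^ q + q * |a| ^ (q - 2) * (-a) * (-b) + K * |a| ^ (q - 2) * (-b) ^ 2 := h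
          _ = |a| ^ q + q * |a| ^ (q - 2) * a * b + K * |a| ^ (q - 2) * b ^ 2 := by ring
      · exact key2 a b hpos (by rwa [abs_of_pos hpos] at hb)
    have hnn : 0 ≤ ((1 + 1/ε) ^ q + q * ε ^ (1 - q)) * |b| ^ q := by positivity
    linarith
  · have hb0 : 0 < |b| := lt_trans (by positivity) hb
    have hba : |a| ≤ |b| / ε := by
      rw [le_div_iff₀ hε]
      nlinarith
    have hpow1 : |a| ^ (q - 2) * |a| = |a| ^ (q - 1) := by
      nth_rewrite 2 [← Real.rpow_one |a|]
      rw [← Real.rpow_add haq]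
      ring_nf
    have hpow2 : |b| ^ (q - 1) * |b| = |b| ^ q := by
      nth_rewrite 2 [← Real.rpow_one |b|]
      rw [← Real.rpow_add hb0]
      ring_nf
    have f1 : |a + b| ^ q ≤ (1 + 1/ε) ^ q * |b| ^ q := by
      have h1 : |a + b| ≤ (1 + 1/ε) * |b| := by
        calc |a + b| ≤ |a| + |b| := abs_add_le a b
          _ ≤ |b| / ε + |b| := by linarith
          _ = (1 + 1/ε) * |b| := by field_simp; ring
      calc |a + b| ^ q ≤ ((1 + 1/ε) * |b|) ^ q :=
            Real.rpow_le_rpow (abs_nonneg _) h1 hq0.le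
        _ = (1 + 1/ε) ^ q * |b| ^ q := Real.mul_rpow (by positivity) (abs_nonneg b)
    have f2 : |a| ^ (q - 1) * |b| ≤ ε ^ (1 - q) * |b| ^ q := by
      have h1 : |a| ^ (q - 1) ≤ (|b| / ε) ^ (q - 1) :=
        Real.rpow_le_rpow (abs_nonneg a) hba (by linarith)
      have h2 : (|b| / ε) ^ (q - 1) = ε ^ (1 - q) * |b| ^ (q - 1) := by
        rw [div_eq_mul_inv, Real.mul_rpow (abs_nonneg b) (by positivity),
          ← Real.rpow_neg_one ε, ← Real.rpow_mul hε.le]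
        ring_nf
      calc |a| ^ (q - 1) * |b| ≤ (|b| / ε) ^ (q - 1) * |b| :=
            mul_le_mul_of_nonneg_right h1 (abs_nonneg b)
        _ = ε ^ (1 - q) * (|b| ^ (q - 1) * |b|) := by rw [h2]; ring
        _ = ε ^ (1 - q) * |b| ^ q := by rw [hpow2]
    have f3 : -(q * (|a| ^ (q - 1) * |b|)) ≤ q * |a| ^ (q - 2) * a * b := by
      have h1 : -(|a| * |b|) ≤ a * b := by
        rw [← abs_mul]
        exact neg_abs_le (a * b)
      have h2 : (0:ℝ) ≤ q * |a| ^ (q - 2) := by positivity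
      calc -(q * (|a| ^ (q - 1) * |b|)) = q * |a| ^ (q - 2) * (-(|a| * |b|)) := by
            rw [← hpow1]; ring
        _ ≤ q * |a| ^ (q - 2) * (a * b) := mul_le_mul_of_nonneg_left h1 h2
        _ = q * |a| ^ (q - 2) * a * b := by ring
    have f4 : (0:ℝ) ≤ |a| ^ q := Real.rpow_nonneg (abs_nonneg a) q
    have f5 : (0:ℝ) ≤ K * |a| ^ (q - 2) * b ^ 2 := by positivity
    have f2' : q * (|a| ^ (q - 1) * |b|) ≤ q * (ε ^ (1 - q) * |b| ^ q) :=
      mul_le_mul_of_nonneg_left f2 hq0.le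
    nlinarith [f1, f2', f3, f4, f5]

theorem stmt_8 (q : ℝ) (hq : 2 < q) (κ : ℝ) (hκ : 0 < κ) :
    ∃ C₁ : ℝ, 0 < C₁ ∧ ∀ a b : ℝ, a ≠ 0 →
      |a + b| ^ q ≤ |a| ^ q + q * |a| ^ (q - 2) * a * b
        + (q * (q - 1) / 2 + κ) * |a| ^ (q - 2) * b ^ 2 + C₁ * |b| ^ q := by
  have hq0 : (0:ℝ) < q := by linarith
  have hq1 : (0:ℝ) < q - 1 := by linarith
  have hq2 : (0:ℝ) < q - 2 := by linarith
  have hqq : (0:ℝ) < q * (q - 1) := by positivity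
  have hB1 : 1 < 1 + 2 * κ / (q * (q - 1)) := by
    have : 0 < 2 * κ / (q * (q - 1)) := by positivity
    linarith
  have hB0 : (0:ℝ) < 1 + 2 * κ / (q * (q - 1)) := by linarith
  set δ : ℝ := (1 + 2 * κ / (q * (q - 1))) ^ (1 / (q - 2)) - 1 with hδ_def
  have hδ : 0 < δ := by
    have h := (Real.one_lt_rpow_iff_of_pos (y := 1/(q-2)) hB0).2 (Or.inl ⟨hB1, by positivity⟩)
    simp only [hδ_def]; linarith
  set ε : ℝ := min (1/2 : ℝ) δ with hε_def
  have hε : 0 < ε := lt_min (by norm_num) hδ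
  have hε2 : ε ≤ 1/2 := min_le_left _ _
  have hεδ : ε ≤ δ := min_le_right _ _
  have hKpos : 0 < q * (q - 1) / 2 + κ := by positivity
  have hKε : q * (q - 1) * (1 + ε) ^ (q - 2) ≤ 2 * (q * (q - 1) / 2 + κ) := by
    have h1 : (1 + ε) ^ (q - 2) ≤ (1 + δ) ^ (q - 2) :=
      Real.rpow_le_rpow (by linarith) (by linarith) hq2.le
    have h2 : (1 + δ) ^ (q - 2) = 1 + 2 * κ / (q * (q - 1)) := by
      have he : (1:ℝ) + δ = (1 + 2 * κ / (q * (q - 1))) ^ (1 / (q - 2)) := by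
        simp [hδ_def]
      rw [he, ← Real.rpow_mul hB0.le, one_div_mul_cancel hq2.ne', Real.rpow_one]
    calc q * (q - 1) * (1 + ε) ^ (q - 2)
        ≤ q * (q - 1) * ((1 + δ) ^ (q - 2)) := mul_le_mul_of_nonneg_left h1 hqq.le
      _ = q * (q - 1) * (1 + 2 * κ / (q * (q - 1))) := by rw [h2]
      _ = q * (q - 1) + 2 * κ := by field_simp
      _ = 2 * (q * (q - 1) / 2 + κ) := by ring
  have key := taylor_aux q (q * (q - 1) / 2 + κ) ε hq hε hε2 hKε
  exact ⟨(1 + 1/ε) ^ q + q * ε ^ (1 - q), by positivity,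
    main_aux q (q * (q - 1) / 2 + κ) ε hq hKpos hε hε2 key⟩
end

section
/- Let n ≥ 2, p > 1, and α < n. Then for any R > 1 and any u ∈ C_c^∞(ℝⁿ), ∫_{ℝⁿ \ B(0,R)} |u(x)|^p |x|^{-α} dx ≤ C(n, p, α) ∫_{ℝⁿ \ B(0,R)} |Du(x)|^p |x|^{-α + p} dx, where C(n, p, α) is a constant depending only on n, p, α. -/
open MeasureTheory Set

theorem ofReal_norm_eq_coe_nnnorm {E : Type*} [SeminormedAddCommGroup E] (a : E) :
    ENNReal.ofReal ‖a‖ = (‖a‖₊ : ENNReal) :=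
  ENNReal.ofReal_eq_coe_nnreal _

lemma rpow_lint_lt_top {e : ℝ} (he : e < -1) :
    ∫⁻ t in Set.Ioi (1:ℝ), ENNReal.ofReal (t ^ e) < ⊤ := by
  rw [← ofReal_integral_eq_lintegral_ofReal (integrableOn_Ioi_rpow_of_lt he one_pos)
    ((ae_restrict_iff' measurableSet_Ioi).2 (Filter.Eventually.of_forall fun t ht =>
      Real.rpow_nonneg (le_of_lt (lt_trans one_pos ht)) e))]
  exact ENNReal.ofReal_lt_top

lemma ftc_bound (u : EuclideanSpace ℝ (Fin n) → ℝ) (hu : ContDiff ℝ (⊤ : ℕ∞) u)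
    (hsupp : HasCompactSupport u) (x : EuclideanSpace ℝ (Fin n)) (hx : 1 ≤ ‖x‖) :
    ENNReal.ofReal |u x| ≤ (‖x‖₊ : ENNReal) * ∫⁻ t in Set.Ioi (1:ℝ), (‖fderiv ℝ u (t • x)‖₊ : ENNReal) := by
  obtain ⟨M, hM⟩ := hsupp.isCompact.isBounded.subset_closedBall 0
  set S : ℝ := max M 1 + 1 with hS
  have hS1 : (1:ℝ) ≤ S := by
    have : (1:ℝ) ≤ max M 1 := le_max_right _ _
    linarith
  have hcont : Continuous (fderiv ℝ u) := hu.continuous_fderiv (by simp)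
  have hderiv : ∀ t ∈ Set.uIcc (1:ℝ) S, HasDerivAt (fun t => u (t • x))
      ((fderiv ℝ u (t • x)) x) t := by
    intro t _
    exact ((hu.differentiable (by simp)).differentiableAt.hasFDerivAt).comp_hasDerivAt t
      (by simpa using (hasDerivAt_id t).smul_const x)
  have hcont' : Continuous fun t : ℝ => (fderiv ℝ u (t • x)) x :=
    ((hcont.comp (continuous_id.smul continuous_const)).clm_apply continuous_const)
  have hftc := intervalIntegral.integral_eq_sub_of_hasDerivAt hderiv
    (hcont'.intervalIntegrable 1 S)
  have huS : u (S • x) = 0 := by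
    apply image_eq_zero_of_notMem_tsupport
    intro hmem
    have := mem_closedBall_zero_iff.1 (hM hmem)
    rw [norm_smul] at this
    have h1 : ‖x‖ ≥ 1 := hx
    have h2 : |S| = S := abs_of_pos (by linarith)
    rw [Real.norm_eq_abs, h2] at this
    nlinarith [le_max_left M 1]
  rw [one_smul, huS, zero_sub] at hftc
  have hux : |u x| = |∫ t in (1:ℝ)..S, (fderiv ℝ u (t • x)) x| := by
    rw [hftc, abs_neg]
  rw [hux]
  have hle : |∫ t in (1:ℝ)..S, (fderiv ℝ u (t • x)) x|
      ≤ ∫ t in (1:ℝ)..S, ‖fderiv ℝ u (t • x)‖ * ‖x‖ := by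
    refine (intervalIntegral.abs_integral_le_integral_abs hS1).trans ?_
    apply intervalIntegral.integral_mono_on hS1
      (hcont'.abs.intervalIntegrable 1 S)
      (((hcont.comp (continuous_id.smul continuous_const)).norm.mul continuous_const).intervalIntegrable 1 S)
    intro t _
    exact (fderiv ℝ u (t • x)).le_opNorm x
  refine (ENNReal.ofReal_le_ofReal hle).trans ?_
  rw [intervalIntegral.integral_of_le hS1]
  have hint : IntegrableOn (fun t : ℝ => ‖fderiv ℝ u (t • x)‖ * ‖x‖) (Set.Ioc 1 S) volume :=
    (((hcont.comp (continuous_id.smul continuous_const)).norm.mul continuous_const)).integrableOn_Ioc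
  rw [ofReal_integral_eq_lintegral_ofReal hint
    (Filter.Eventually.of_forall fun t => by positivity)]
  calc ∫⁻ t in Set.Ioc (1:ℝ) S, ENNReal.ofReal (‖fderiv ℝ u (t • x)‖ * ‖x‖)
      ≤ ∫⁻ t in Set.Ioi (1:ℝ), ENNReal.ofReal (‖fderiv ℝ u (t • x)‖ * ‖x‖) :=
        lintegral_mono_set Set.Ioc_subset_Ioi_self
    _ = (‖x‖₊ : ENNReal) * ∫⁻ t in Set.Ioi (1:ℝ), (‖fderiv ℝ u (t • x)‖₊ : ENNReal) := by
        simp_rw [ENNReal.ofReal_mul (norm_nonneg _), ofReal_norm_eq_coe_nnnorm]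
        rw [lintegral_mul_const' _ _ (by simp), mul_comm]

lemma holder_step {p q β : ℝ} (hpq : p.HolderConjugate q) {g : ℝ → ENNReal}
    (hg : AEMeasurable g (volume.restrict (Set.Ioi (1:ℝ)))) :
    ∫⁻ t in Set.Ioi (1:ℝ), g t ≤
      (∫⁻ t in Set.Ioi (1:ℝ), (g t) ^ p * ENNReal.ofReal (t ^ (β * p))) ^ (1/p)
        * (∫⁻ t in Set.Ioi (1:ℝ), ENNReal.ofReal (t ^ (-β * q))) ^ (1/q) := by
  have hmeas : Measurable fun t : ℝ => ENNReal.ofReal (t ^ β) :=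
    (measurable_id.pow_const β).ennreal_ofReal
  have hmeas' : Measurable fun t : ℝ => ENNReal.ofReal (t ^ (-β)) :=
    (measurable_id.pow_const (-β)).ennreal_ofReal
  have h1 : ∫⁻ t in Set.Ioi (1:ℝ), g t
      = ∫⁻ t in Set.Ioi (1:ℝ), (g t * ENNReal.ofReal (t ^ β)) * ENNReal.ofReal (t ^ (-β)) := by
    refine lintegral_congr_ae ((ae_restrict_iff' measurableSet_Ioi).2
      (Filter.Eventually.of_forall fun t ht => ?_))
    have ht0 : (0:ℝ) < t := lt_trans one_pos ht
    show g t = g t * ENNReal.ofReal (t ^ β) * ENNReal.ofReal (t ^ (-β))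
    rw [mul_assoc, ← ENNReal.ofReal_mul (Real.rpow_nonneg ht0.le _),
      ← Real.rpow_add ht0, add_neg_cancel, Real.rpow_zero, ENNReal.ofReal_one, mul_one]
  rw [h1]
  calc ∫⁻ t in Set.Ioi (1:ℝ), (g t * ENNReal.ofReal (t ^ β)) * ENNReal.ofReal (t ^ (-β))
      ≤ (∫⁻ t in Set.Ioi (1:ℝ), (g t * ENNReal.ofReal (t ^ β)) ^ p) ^ (1/p)
          * (∫⁻ t in Set.Ioi (1:ℝ), (ENNReal.ofReal (t ^ (-β))) ^ q) ^ (1/q) :=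
        ENNReal.lintegral_mul_le_Lp_mul_Lq _ hpq (hg.mul hmeas.aemeasurable)
          hmeas'.aemeasurable
    _ = (∫⁻ t in Set.Ioi (1:ℝ), (g t) ^ p * ENNReal.ofReal (t ^ (β * p))) ^ (1/p)
          * (∫⁻ t in Set.Ioi (1:ℝ), ENNReal.ofReal (t ^ (-β * q))) ^ (1/q) := by
        congr 1
        · congr 1
          refine lintegral_congr_ae ((ae_restrict_iff' measurableSet_Ioi).2
            (Filter.Eventually.of_forall fun t ht => ?_))
          have ht0 : (0:ℝ) < t := lt_trans one_pos ht
          show (g t * ENNReal.ofReal (t ^ β)) ^ p = g t ^ p * ENNReal.ofReal (t ^ (β * p))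
          rw [ENNReal.mul_rpow_of_nonneg _ _ hpq.nonneg,
            ENNReal.ofReal_rpow_of_pos (Real.rpow_pos_of_pos ht0 β), Real.rpow_mul ht0.le]
        · congr 1
          refine lintegral_congr_ae ((ae_restrict_iff' measurableSet_Ioi).2
            (Filter.Eventually.of_forall fun t ht => ?_))
          have ht0 : (0:ℝ) < t := lt_trans one_pos ht
          show ENNReal.ofReal (t ^ (-β)) ^ q = ENNReal.ofReal (t ^ (-β * q))
          rw [ENNReal.ofReal_rpow_of_pos (Real.rpow_pos_of_pos ht0 _), Real.rpow_mul ht0.le]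

lemma scaling_step {v : EuclideanSpace ℝ (Fin n) → ENNReal} (hv : Measurable v)
    {R t : ℝ} (e : ℝ) (hR : 0 < R) (ht : 1 ≤ t) :
    ∫⁻ x in {x : EuclideanSpace ℝ (Fin n) | R ≤ ‖x‖}, v (t • x) * (‖x‖₊ : ENNReal) ^ e
      ≤ ENNReal.ofReal (t ^ (-e - n)) *
        ∫⁻ x in {x : EuclideanSpace ℝ (Fin n) | R ≤ ‖x‖}, v x * (‖x‖₊ : ENNReal) ^ e := by
  have ht0 : (0:ℝ) < t := lt_of_lt_of_le one_pos ht
  set A : Set (EuclideanSpace ℝ (Fin n)) := {x | R ≤ ‖x‖} with hA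
  set At : Set (EuclideanSpace ℝ (Fin n)) := {x | t * R ≤ ‖x‖} with hAt
  have hAmeas : MeasurableSet A := (isClosed_le continuous_const continuous_norm).measurableSet
  have hAtmeas : MeasurableSet At := (isClosed_le continuous_const continuous_norm).measurableSet
  set G : EuclideanSpace ℝ (Fin n) → ENNReal :=
    At.indicator (fun y => v y * (‖y‖₊ : ENNReal) ^ e) with hG
  have hGmeas : Measurable G :=
    (hv.mul (measurable_nnnorm.coe_nnreal_ennreal.pow_const e)).indicator hAtmeas
  have hmem : ∀ x : EuclideanSpace ℝ (Fin n), (t • x ∈ At ↔ x ∈ A) := by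
    intro x
    simp only [hA, hAt, Set.mem_setOf_eq, norm_smul, Real.norm_eq_abs, abs_of_pos ht0]
    exact mul_le_mul_iff_right₀ ht0
  have key : ∀ x, A.indicator (fun x => v (t • x) * (‖x‖₊ : ENNReal) ^ e) x
      = ENNReal.ofReal (t ^ (-e)) * G (t • x) := by
    intro x
    by_cases hx : x ∈ A
    · rw [Set.indicator_of_mem hx, hG, Set.indicator_of_mem ((hmem x).2 hx)]
      have hx0 : (0:ℝ) < ‖x‖ := lt_of_lt_of_le hR hx
      have hnorm : (‖t • x‖₊ : ENNReal) = ENNReal.ofReal t * (‖x‖₊ : ENNReal) := by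
        rw [← ofReal_norm_eq_coe_nnnorm, ← ofReal_norm_eq_coe_nnnorm, norm_smul,
          Real.norm_eq_abs, abs_of_pos ht0, ENNReal.ofReal_mul ht0.le]
      rw [hnorm, ENNReal.mul_rpow_of_ne_zero (by simp [ht0, ht0.ne']) (by simp [norm_pos_iff.mp hx0]) e]
      rw [ENNReal.ofReal_rpow_of_pos ht0]
      calc v (t • x) * (‖x‖₊ : ENNReal) ^ e
          = (ENNReal.ofReal (t ^ (-e)) * ENNReal.ofReal (t ^ e)) *
            (v (t • x) * (‖x‖₊ : ENNReal) ^ e) := by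
            rw [← ENNReal.ofReal_mul (Real.rpow_nonneg ht0.le _), ← Real.rpow_add ht0,
              neg_add_cancel, Real.rpow_zero, ENNReal.ofReal_one, one_mul]
        _ = ENNReal.ofReal (t ^ (-e)) * (v (t • x) * (ENNReal.ofReal (t ^ e) * (‖x‖₊ : ENNReal) ^ e)) := by
            ring
    · rw [Set.indicator_of_notMem hx, hG,
        Set.indicator_of_notMem (fun h => hx ((hmem x).1 h)), mul_zero]
  calc ∫⁻ x in A, v (t • x) * (‖x‖₊ : ENNReal) ^ e
      = ∫⁻ x, A.indicator (fun x => v (t • x) * (‖x‖₊ : ENNReal) ^ e) x :=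
        (lintegral_indicator hAmeas _).symm
    _ = ENNReal.ofReal (t ^ (-e)) * ∫⁻ x, G (t • x) := by
        simp_rw [key]; rw [lintegral_const_mul' _ _ ENNReal.ofReal_ne_top]
    _ = ENNReal.ofReal (t ^ (-e)) * ∫⁻ y, G y ∂(Measure.map (t • ·) volume) := by
        rw [lintegral_map hGmeas (measurable_const_smul t)]
    _ = ENNReal.ofReal (t ^ (-e)) * (ENNReal.ofReal |(t ^ n)⁻¹| * ∫⁻ y, G y) := by
        rw [Measure.map_addHaar_smul volume ht0.ne', lintegral_smul_measure, smul_eq_mul,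
          finrank_euclideanSpace_fin]
    _ = ENNReal.ofReal (t ^ (-e - n)) * ∫⁻ y, G y := by
        rw [← mul_assoc, ← ENNReal.ofReal_mul (Real.rpow_nonneg ht0.le _)]
        congr 2
        rw [abs_of_pos (by positivity), ← Real.rpow_natCast t n, ← Real.rpow_neg ht0.le,
          ← Real.rpow_add ht0]
        ring_nf
    _ ≤ ENNReal.ofReal (t ^ (-e - n)) * ∫⁻ x in A, v x * (‖x‖₊ : ENNReal) ^ e := by
        refine mul_le_mul_right ?_ _
        rw [hG, lintegral_indicator hAtmeas _]
        refine lintegral_mono_set ?_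
        intro y hy
        simp only [hAt, Set.mem_setOf_eq] at hy
        exact le_trans (le_mul_of_one_le_left hR.le ht) hy


theorem stmt_10 (n : ℕ) (hn : 2 ≤ n) (p α : ℝ) (hp : 1 < p) (hα : α < n) :
    ∃ C : ℝ, 0 < C ∧ ∀ R : ℝ, 1 < R →
      ∀ u : EuclideanSpace ℝ (Fin n) → ℝ, ContDiff ℝ (⊤ : ℕ∞) u → HasCompactSupport u →
        ∫ x in {x : EuclideanSpace ℝ (Fin n) | R ≤ ‖x‖}, |u x| ^ p * ‖x‖ ^ (-α)
          ≤ C * ∫ x in {x : EuclideanSpace ℝ (Fin n) | R ≤ ‖x‖},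
              ‖fderiv ℝ u x‖ ^ p * ‖x‖ ^ (-α + p) := by
  have hp0 : (0:ℝ) ≤ p := by linarith
  set q : ℝ := p / (p - 1) with hq
  have hpq : p.HolderConjugate q := Real.HolderConjugate.conjExponent hp
  set β : ℝ := (n + 2*p - 2 - α) / (2*p) with hβ
  have hppos : (0:ℝ) < p := lt_trans one_pos hp
  have hβq : -β * q < -1 := by
    have h1 : β * q = (↑n + 2*p - 2 - α) / (2*(p-1)) := by
      rw [hβ, hq, div_mul_div_comm,
        div_eq_div_iff (by nlinarith : (0:ℝ) < 2*p*(p-1)).ne'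
          (by nlinarith : (0:ℝ) < 2*(p-1)).ne']
      ring
    have h2 : 1 < β * q := by
      rw [h1, lt_div_iff₀ (by nlinarith : (0:ℝ) < 2*(p-1))]; linarith
    linarith
  set e₂ : ℝ := β * p + (-(p - α) - (n:ℝ)) with he₂def
  have he₂ : e₂ < -1 := by
    have h1 : β * p = (↑n + 2*p - 2 - α) / 2 := by
      rw [hβ, div_mul_eq_mul_div,
        div_eq_div_iff (by positivity) (two_ne_zero)]
      ring
    rw [he₂def, h1]
    linarith
  set K : ENNReal := ∫⁻ t in Set.Ioi (1:ℝ), ENNReal.ofReal (t ^ (-β * q)) with hKdef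
  set K₂ : ENNReal := ∫⁻ t in Set.Ioi (1:ℝ), ENNReal.ofReal (t ^ e₂) with hK2def
  have hKne : K ≠ ⊤ := (rpow_lint_lt_top hβq).ne
  have hK2ne : K₂ ≠ ⊤ := (rpow_lint_lt_top he₂).ne
  have hKpne : K ^ (p/q) ≠ ⊤ :=
    ENNReal.rpow_ne_top_of_nonneg (div_nonneg hp0 hpq.symm.nonneg) hKne
  refine ⟨(K ^ (p/q) * K₂).toReal + 1, by positivity, ?_⟩
  intro R hR u hu hsupp
  set A : Set (EuclideanSpace ℝ (Fin n)) := {x | R ≤ ‖x‖} with hA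
  have hAmeas : MeasurableSet A := (isClosed_le continuous_const continuous_norm).measurableSet
  have hcont : Continuous (fderiv ℝ u) := hu.continuous_fderiv (by simp)
  set v : EuclideanSpace ℝ (Fin n) → ENNReal := fun y => (‖fderiv ℝ u y‖₊ : ENNReal) ^ p
    with hv
  have hvmeas : Measurable v := (hcont.measurable.nnnorm.coe_nnreal_ennreal).pow_const p
  set Rlint : ENNReal := ∫⁻ x in A, v x * (‖x‖₊ : ENNReal) ^ (p - α) with hRl
  set frhs : EuclideanSpace ℝ (Fin n) → ℝ := fun x => ‖fderiv ℝ u x‖ ^ p * ‖x‖ ^ (-α + p)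
    with hfr
  -- integrability of the RHS integrand on A
  have hKc : IsCompact (tsupport (fderiv ℝ u)) := hsupp.fderiv (𝕜 := ℝ)
  have hcontOn : ContinuousOn frhs A := by
    intro x hx
    have hx0 : (0:ℝ) < ‖x‖ := lt_of_lt_of_le (lt_trans one_pos hR) hx
    exact ((hcont.continuousAt.norm.rpow_const (Or.inr hp0)).mul
      (continuous_norm.continuousAt.rpow_const (Or.inl hx0.ne'))).continuousWithinAt
  have hint1 : IntegrableOn frhs (A ∩ tsupport (fderiv ℝ u)) volume :=
    (hcontOn.mono Set.inter_subset_left).integrableOn_compact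
      (hKc.inter_left (isClosed_le continuous_const continuous_norm))
  have hzero : ∀ x ∈ A \ tsupport (fderiv ℝ u), frhs x = 0 := by
    intro x hx
    have : fderiv ℝ u x = 0 := image_eq_zero_of_notMem_tsupport hx.2
    simp [hfr, this, Real.zero_rpow (by positivity : p ≠ 0)]
  have hint2 : IntegrableOn frhs (A \ tsupport (fderiv ℝ u)) volume := by
    refine (integrableOn_congr_fun hzero
      (hAmeas.diff (isClosed_tsupport _).measurableSet)).2 ?_
    exact integrableOn_zero
  have hint : IntegrableOn frhs A volume := by
    refine (hint1.union hint2).mono_set ?_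
    intro x hx
    by_cases h : x ∈ tsupport (fderiv ℝ u)
    · exact Set.mem_union_left _ ⟨hx, h⟩
    · exact Set.mem_union_right _ ⟨hx, h⟩
  have hfrmeas : Measurable frhs :=
    (hcont.measurable.norm.pow_const p).mul (measurable_norm.pow_const (-α + p))
  have hcongr : ∫⁻ x in A, ENNReal.ofReal (frhs x) = Rlint := by
    refine lintegral_congr_ae ((ae_restrict_iff' hAmeas).2
      (Filter.Eventually.of_forall fun x hx => ?_))
    have hx0 : (0:ℝ) < ‖x‖ := lt_of_lt_of_le (lt_trans one_pos hR) hx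
    show ENNReal.ofReal (‖fderiv ℝ u x‖ ^ p * ‖x‖ ^ (-α + p))
      = (‖fderiv ℝ u x‖₊ : ENNReal) ^ p * (‖x‖₊ : ENNReal) ^ (p - α)
    rw [ENNReal.ofReal_mul (by positivity),
      ← ENNReal.ofReal_rpow_of_nonneg (norm_nonneg _) hp0,
      ← ENNReal.ofReal_rpow_of_pos hx0, ofReal_norm_eq_coe_nnnorm,
      ofReal_norm_eq_coe_nnnorm, neg_add_eq_sub]
  have hRlne : Rlint ≠ ⊤ := by
    rw [← hcongr]
    refine ne_of_lt (lt_of_le_of_lt (lintegral_mono fun x => ?_) hint.2)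
    rw [Real.enorm_eq_ofReal_abs]
    exact ENNReal.ofReal_le_ofReal (le_abs_self _)
  have hRint_eq : ∫ x in A, frhs x = Rlint.toReal := by
    rw [integral_eq_lintegral_of_nonneg_ae
      (Filter.Eventually.of_forall fun x => by positivity)
      hfrmeas.aestronglyMeasurable, hcongr]
  set L : ENNReal := ∫⁻ x in A, ENNReal.ofReal (|u x| ^ p * ‖x‖ ^ (-α)) with hL
  have hL_eq : ∫ x in A, |u x| ^ p * ‖x‖ ^ (-α) = L.toReal := by
    rw [integral_eq_lintegral_of_nonneg_ae (f := fun x => |u x| ^ p * ‖x‖ ^ (-α))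
      (Filter.Eventually.of_forall fun x => by positivity)
      (((hu.continuous.measurable.abs.pow_const p).mul
        (measurable_norm.pow_const (-α))).aestronglyMeasurable)]
  -- pointwise estimate
  set P : EuclideanSpace ℝ (Fin n) → ENNReal := fun x =>
    ∫⁻ t in Set.Ioi (1:ℝ), ((‖fderiv ℝ u (t • x)‖₊ : ENNReal)) ^ p
      * ENNReal.ofReal (t ^ (β * p)) with hP
  have hpoint : ∀ x ∈ A, ENNReal.ofReal (|u x| ^ p * ‖x‖ ^ (-α))
      ≤ K ^ (p/q) * ((‖x‖₊ : ENNReal) ^ (p - α) * P x) := by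
    intro x hx
    have hx1 : (1:ℝ) ≤ ‖x‖ := le_trans hR.le hx
    have hx0 : (0:ℝ) < ‖x‖ := lt_of_lt_of_le one_pos hx1
    have hxne : (‖x‖₊ : ENNReal) ≠ 0 := by simp [norm_pos_iff.mp hx0]
    have hxtop : (‖x‖₊ : ENNReal) ≠ ⊤ := ENNReal.coe_ne_top
    have hb := ftc_bound u hu hsupp x hx1
    have hg : AEMeasurable (fun t : ℝ => (‖fderiv ℝ u (t • x)‖₊ : ENNReal))
        (volume.restrict (Set.Ioi (1:ℝ))) :=
      ((hcont.comp (continuous_id.smul continuous_const)).measurable.nnnorm.coe_nnreal_ennreal).aemeasurable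
    have hh := holder_step (β := β) hpq hg
    set J : ENNReal := ∫⁻ t in Set.Ioi (1:ℝ), (‖fderiv ℝ u (t • x)‖₊ : ENNReal) with hJ
    calc ENNReal.ofReal (|u x| ^ p * ‖x‖ ^ (-α))
        = (ENNReal.ofReal |u x|) ^ p * (‖x‖₊ : ENNReal) ^ (-α) := by
          rw [ENNReal.ofReal_mul (by positivity),
            ← ENNReal.ofReal_rpow_of_nonneg (abs_nonneg _) hp0,
            ← ENNReal.ofReal_rpow_of_pos hx0, ofReal_norm_eq_coe_nnnorm]
      _ ≤ ((‖x‖₊ : ENNReal) * J) ^ p * (‖x‖₊ : ENNReal) ^ (-α) :=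
          mul_le_mul_left (ENNReal.rpow_le_rpow hb hp0) _
      _ = (‖x‖₊ : ENNReal) ^ p * J ^ p * (‖x‖₊ : ENNReal) ^ (-α) := by
          rw [ENNReal.mul_rpow_of_nonneg _ _ hp0]
      _ ≤ (‖x‖₊ : ENNReal) ^ p * (P x * K ^ (p/q)) * (‖x‖₊ : ENNReal) ^ (-α) := by
          refine mul_le_mul_left (mul_le_mul_right ?_ _) _
          calc J ^ p ≤ ((P x) ^ (1/p) * K ^ (1/q)) ^ p :=
                ENNReal.rpow_le_rpow hh hp0
            _ = P x * K ^ (p/q) := by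
                rw [ENNReal.mul_rpow_of_nonneg _ _ hp0, ← ENNReal.rpow_mul,
                  ← ENNReal.rpow_mul, one_div_mul_cancel (by positivity : p ≠ 0),
                  ENNReal.rpow_one]
                congr 1
                rw [hq]; field_simp
      _ = K ^ (p/q) * ((‖x‖₊ : ENNReal) ^ (p - α) * P x) := by
          have hsplit : (‖x‖₊ : ENNReal) ^ (p - α)
              = (‖x‖₊ : ENNReal) ^ p * (‖x‖₊ : ENNReal) ^ (-α) := by
            rw [← ENNReal.rpow_add _ _ hxne hxtop, sub_eq_add_neg]
          rw [hsplit]; ring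
  -- swap and scaling
  have hswap : ∫⁻ x in A, (‖x‖₊ : ENNReal) ^ (p - α) * P x ≤ K₂ * Rlint := by
    have hc1 : Continuous fun z : EuclideanSpace ℝ (Fin n) × ℝ => fderiv ℝ u (z.2 • z.1) :=
      hcont.comp (continuous_snd.smul continuous_fst)
    have hFmeas : Measurable (Function.uncurry fun (x : EuclideanSpace ℝ (Fin n)) (t : ℝ) =>
        ((‖fderiv ℝ u (t • x)‖₊ : ENNReal) ^ p * ENNReal.ofReal (t ^ (β * p)))
          * (‖x‖₊ : ENNReal) ^ (p - α)) := by
      exact (((hc1.measurable.nnnorm.coe_nnreal_ennreal).pow_const p).mul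
        ((measurable_snd.pow_const (β * p)).ennreal_ofReal)).mul
        ((measurable_fst.nnnorm.coe_nnreal_ennreal).pow_const (p - α))
    calc ∫⁻ x in A, (‖x‖₊ : ENNReal) ^ (p - α) * P x
        = ∫⁻ x in A, ∫⁻ t in Set.Ioi (1:ℝ),
            ((‖fderiv ℝ u (t • x)‖₊ : ENNReal) ^ p * ENNReal.ofReal (t ^ (β * p)))
              * (‖x‖₊ : ENNReal) ^ (p - α) := by
          refine lintegral_congr_ae ((ae_restrict_iff' hAmeas).2
            (Filter.Eventually.of_forall fun x hx => ?_))
          have hx0 : (0:ℝ) < ‖x‖ := lt_of_lt_of_le (lt_trans one_pos hR) hx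
          have hcne : (‖x‖₊ : ENNReal) ^ (p - α) ≠ ⊤ := by
            simp [ENNReal.rpow_eq_top_iff, norm_pos_iff.mp hx0]
          show (‖x‖₊ : ENNReal) ^ (p - α) * P x = _
          rw [hP]
          simp only []
          rw [lintegral_mul_const' _ _ hcne, mul_comm]
      _ = ∫⁻ t in Set.Ioi (1:ℝ), ∫⁻ x in A,
            ((‖fderiv ℝ u (t • x)‖₊ : ENNReal) ^ p * ENNReal.ofReal (t ^ (β * p)))
              * (‖x‖₊ : ENNReal) ^ (p - α) :=
          lintegral_lintegral_swap hFmeas.aemeasurable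
      _ ≤ ∫⁻ t in Set.Ioi (1:ℝ),
            ENNReal.ofReal (t ^ e₂) * Rlint := by
          refine lintegral_mono_ae ((ae_restrict_iff' measurableSet_Ioi).2
            (Filter.Eventually.of_forall fun t ht => ?_))
          have ht1 : (1:ℝ) ≤ t := le_of_lt ht
          have ht0 : (0:ℝ) < t := lt_of_lt_of_le one_pos ht1
          have step1 : ∫⁻ x in A,
              ((‖fderiv ℝ u (t • x)‖₊ : ENNReal) ^ p * ENNReal.ofReal (t ^ (β * p)))
                * (‖x‖₊ : ENNReal) ^ (p - α)
              = ENNReal.ofReal (t ^ (β * p)) *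
                ∫⁻ x in A, v (t • x) * (‖x‖₊ : ENNReal) ^ (p - α) := by
            rw [← lintegral_const_mul' _ _ ENNReal.ofReal_ne_top]
            refine lintegral_congr fun x => ?_
            simp only [hv]; ring
          rw [step1]
          calc ENNReal.ofReal (t ^ (β * p)) *
                ∫⁻ x in A, v (t • x) * (‖x‖₊ : ENNReal) ^ (p - α)
              ≤ ENNReal.ofReal (t ^ (β * p)) *
                (ENNReal.ofReal (t ^ (-(p - α) - n)) * Rlint) :=
                mul_le_mul_right (scaling_step hvmeas (p - α) (lt_trans one_pos hR) ht1) _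
            _ = ENNReal.ofReal (t ^ e₂) * Rlint := by
                rw [← mul_assoc, ← ENNReal.ofReal_mul (Real.rpow_nonneg ht0.le _),
                  ← Real.rpow_add ht0, he₂def]
      _ = K₂ * Rlint := by
          rw [hK2def, lintegral_mul_const' _ _ hRlne]
  -- main lintegral estimate
  have hmain : L ≤ K ^ (p/q) * (K₂ * Rlint) := by
    calc L ≤ ∫⁻ x in A, K ^ (p/q) * ((‖x‖₊ : ENNReal) ^ (p - α) * P x) :=
          lintegral_mono_ae ((ae_restrict_iff' hAmeas).2
            (Filter.Eventually.of_forall hpoint))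
      _ = K ^ (p/q) * ∫⁻ x in A, (‖x‖₊ : ENNReal) ^ (p - α) * P x :=
          lintegral_const_mul' _ _ hKpne
      _ ≤ K ^ (p/q) * (K₂ * Rlint) := mul_le_mul_right hswap _
  -- conclude
  rw [hL_eq, hRint_eq]
  calc L.toReal ≤ (K ^ (p/q) * (K₂ * Rlint)).toReal :=
        ENNReal.toReal_mono (ENNReal.mul_ne_top hKpne (ENNReal.mul_ne_top hK2ne hRlne)) hmain
    _ = (K ^ (p/q) * K₂).toReal * Rlint.toReal := by
        rw [← mul_assoc, ENNReal.toReal_mul]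
    _ ≤ ((K ^ (p/q) * K₂).toReal + 1) * Rlint.toReal := by
        refine mul_le_mul_of_nonneg_right (by linarith) ENNReal.toReal_nonneg
end

section
/- Let n ≥ 2, 1 < p < n, set p* = np/(n-p), and let v(x) = a₀ (1 + |x|^{p/(p-1)})^{-(n-p)/p} with a₀ > 0. Then for every φ ∈ C¹ compactly supported in ℝⁿ and constant near the origin, ∫_{ℝⁿ} v^{p*-2} φ² dx ≤ C(n,p) ∫_{ℝⁿ} |Dv|^{p-2} |Dφ|² dx. -/
set_option maxHeartbeats 1000000


open MeasureTheory Filter Metric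

section IBP

variable {m : ℕ}

/-- If `h` is differentiable with continuous derivative `h'` and compactly supported,
then `∫ x, h' x u₀ = 0`. -/
lemma amgm_aux {a m w b c : ℝ} (hw : 0 < w) (hm : 0 ≤ m) (ha : 0 ≤ a) (hc : 0 ≤ c)
    (hid : a ^ 2 = m * w) :
    2 * a * (|b| * c) ≤ m * b ^ 2 + w * c ^ 2 := by
  nlinarith [sq_nonneg (a * |b| - w * c), sq_abs b, hw, abs_nonneg b]

lemma ibp_zero (h : EuclideanSpace ℝ (Fin m) → ℝ)
    (h' : EuclideanSpace ℝ (Fin m) → (EuclideanSpace ℝ (Fin m) →L[ℝ] ℝ))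
    (hd : ∀ x, HasFDerivAt h (h' x) x) (hc : Continuous h')
    (hs : HasCompactSupport h) (u₀ : EuclideanSpace ℝ (Fin m)) :
    ∫ x, h' x u₀ = 0 := by
  classical
  have hcont : Continuous h := by
    rw [continuous_iff_continuousAt]; exact fun x => (hd x).continuousAt
  have h'zero : ∀ x, x ∉ tsupport h → h' x = 0 := by
    intro x hx
    have hev : h =ᶠ[nhds x] (fun _ => (0 : ℝ)) := by
      filter_upwards [(isClosed_tsupport h).isOpen_compl.mem_nhds hx] with y hy
      exact image_eq_zero_of_notMem_tsupport hy
    have h1 : fderiv ℝ h x = h' x := (hd x).fderiv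
    have h2 : fderiv ℝ h x = fderiv ℝ (fun _ => (0:ℝ)) x := hev.fderiv_eq
    rw [fderiv_fun_const] at h2
    rw [← h1, h2]; rfl
  have hs' : HasCompactSupport h' := HasCompactSupport.intro hs h'zero
  obtain ⟨M, hM⟩ := hs'.exists_bound_of_continuous hc
  have hM0 : 0 ≤ M := le_trans (norm_nonneg (h' 0)) (hM 0)
  set K' : Set (EuclideanSpace ℝ (Fin m)) := cthickening ‖u₀‖ (tsupport h) with hK'def
  have hK' : IsCompact K' := hs.cthickening
  have key := hasDerivAt_integral_of_dominated_loc_of_deriv_le (μ := volume)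
      (F := fun (t : ℝ) (x : EuclideanSpace ℝ (Fin m)) => h (x + t • u₀))
      (F' := fun (t : ℝ) (x : EuclideanSpace ℝ (Fin m)) => h' (x + t • u₀) u₀)
      (x₀ := (0:ℝ))
      (bound := K'.indicator fun _ => M * ‖u₀‖) (Metric.ball_mem_nhds _ one_pos)
      (Eventually.of_forall fun t =>
        (hcont.comp (continuous_id.add continuous_const)).aestronglyMeasurable)
      (by
        have : Integrable h volume := hcont.integrable_of_hasCompactSupport hs
        simpa using this)
      (((ContinuousLinearMap.apply ℝ ℝ u₀).continuous.comp
        (hc.comp (continuous_id.add continuous_const))).aestronglyMeasurable)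
      (ae_of_all _ (by
        intro x t ht
        by_cases hx : x ∈ K'
        · rw [Set.indicator_of_mem hx]
          exact le_trans ((h' _).le_opNorm u₀)
            (mul_le_mul_of_nonneg_right (hM _) (norm_nonneg _))
        · rw [Set.indicator_of_notMem hx]
          have hxt : x + t • u₀ ∉ tsupport h := by
            intro hmem
            apply hx
            refine mem_cthickening_of_dist_le x (x + t • u₀) ‖u₀‖ _ hmem ?_
            rw [dist_eq_norm]
            have hxx : x - (x + t • u₀) = -(t • u₀) := by abel
            rw [hxx, norm_neg, norm_smul, Real.norm_eq_abs]
            calc |t| * ‖u₀‖ ≤ 1 * ‖u₀‖ := by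
                  apply mul_le_mul_of_nonneg_right _ (norm_nonneg _)
                  have := mem_ball_iff_norm.mp ht
                  simp only [sub_zero, Real.norm_eq_abs] at this
                  exact this.le
              _ = ‖u₀‖ := one_mul _
          show ‖h' (x + t • u₀) u₀‖ ≤ 0
          rw [h'zero _ hxt]
          simp))
      ((integrable_indicator_iff hK'.measurableSet).mpr
        (integrableOn_const hK'.measure_lt_top.ne))
      (ae_of_all _ (by
        intro x t _
        have hpath : HasDerivAt (fun s : ℝ => x + s • u₀) u₀ t := by
          simpa using ((hasDerivAt_id t).smul_const u₀).const_add x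
        exact (hd (x + t • u₀)).comp_hasDerivAt t hpath))
  have h1 : HasDerivAt (fun t : ℝ => ∫ x : EuclideanSpace ℝ (Fin m), h (x + t • u₀))
      (∫ x : EuclideanSpace ℝ (Fin m), h' (x + (0:ℝ) • u₀) u₀) 0 := key.2
  have h2 : (fun t : ℝ => ∫ x : EuclideanSpace ℝ (Fin m), h (x + t • u₀))
      = fun _ : ℝ => ∫ x : EuclideanSpace ℝ (Fin m), h x := by
    funext t
    exact integral_add_right_eq_self h (t • u₀)
  rw [h2] at h1
  have h3 : (∫ x : EuclideanSpace ℝ (Fin m), h' (x + (0:ℝ) • u₀) u₀) = 0 :=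
    h1.unique (hasDerivAt_const 0 _)
  simpa using h3

end IBP

theorem stmt_11 (n : ℕ) (hn : 2 ≤ n) (p a₀ : ℝ) (hp1 : 1 < p) (hpn : p < n) (ha₀ : 0 < a₀)
    (q : ℝ) (hq : q = n * p / (n - p))
    (v : EuclideanSpace ℝ (Fin n) → ℝ)
    (hv : ∀ x, v x = a₀ * (1 + ‖x‖ ^ (p / (p - 1))) ^ (-(((n : ℝ) - p) / p))) :
    ∃ C : ℝ, 0 < C ∧
      ∀ φ : EuclideanSpace ℝ (Fin n) → ℝ,
        ContDiff ℝ 1 φ → HasCompactSupport φ →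
        (∃ r : ℝ, 0 < r ∧ ∀ x : EuclideanSpace ℝ (Fin n), ‖x‖ < r → φ x = φ 0) →
        ∫ x, v x ^ (q - 2) * φ x ^ 2
          ≤ C * ∫ x, ‖fderiv ℝ v x‖ ^ (p - 2) * ‖fderiv ℝ φ x‖ ^ 2 := by
  classical
  have hp0 : (0:ℝ) < p := lt_trans one_pos hp1
  have hpm1 : (0:ℝ) < p - 1 := by linarith
  have hnR : (p:ℝ) < (n:ℝ) := hpn
  have hnp : (0:ℝ) < (n:ℝ) - p := by linarith
  have hn0 : (0:ℝ) < (n:ℝ) := lt_trans hp0 hnR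
  set p' : ℝ := p / (p - 1) with hp'def
  have hp'1 : 1 < p' := by
    rw [hp'def, lt_div_iff₀ hpm1]; linarith
  have hp'0 : 0 < p' := lt_trans one_pos hp'1
  set γ : ℝ := ((n:ℝ) - p) / p with hγdef
  have hγ0 : 0 < γ := div_pos hnp hp0
  set σ : ℝ := (γ + 1) * (p - 2) + 1 with hσdef
  set K : ℝ := a₀ ^ (p - 2) * (γ * p') ^ (p - 1) with hKdef
  have hγp' : 0 < γ * p' := mul_pos hγ0 hp'0
  have hK0 : 0 < K := mul_pos (Real.rpow_pos_of_pos ha₀ _) (Real.rpow_pos_of_pos hγp' _)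
  set c₀ : ℝ := n * K * a₀ ^ (2 - q) with hc₀def
  have hc₀ : 0 < c₀ := by
    have := Real.rpow_pos_of_pos ha₀ (2 - q)
    positivity
  clear_value p' γ σ K c₀
  refine ⟨1 / c₀, by positivity, ?_⟩
  intro φ hφ1 hφc hφ0
  obtain ⟨r₀, hr₀pos, hφr⟩ := hφ0
  -- basic positivity
  have hN0 : ∀ x : EuclideanSpace ℝ (Fin n), (0:ℝ) ≤ ‖x‖ ^ p' :=
    fun x => Real.rpow_nonneg (norm_nonneg x) _
  have hu : ∀ x : EuclideanSpace ℝ (Fin n), (0:ℝ) < 1 + ‖x‖ ^ p' :=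
    fun x => by have := hN0 x; linarith
  -- derivative of the norm power
  set DN : EuclideanSpace ℝ (Fin n) → (EuclideanSpace ℝ (Fin n) →L[ℝ] ℝ) :=
    fun x => (p' * ‖x‖ ^ (p' - 2)) • innerSL ℝ x with hDNdef
  have hN : ∀ x : EuclideanSpace ℝ (Fin n),
      HasFDerivAt (fun y : EuclideanSpace ℝ (Fin n) => ‖y‖ ^ p') (DN x) x :=
    fun x => hasFDerivAt_norm_rpow x hp'1
  have hNcont : Continuous (fun y : EuclideanSpace ℝ (Fin n) => ‖y‖ ^ p') :=
    (contDiff_norm_rpow hp'1).continuous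
  have hDNcont : Continuous DN := by
    have h2 : Continuous (fderiv ℝ (fun y : EuclideanSpace ℝ (Fin n) => ‖y‖ ^ p')) :=
      (contDiff_norm_rpow hp'1).continuous_fderiv one_ne_zero
    have h3 : (fderiv ℝ (fun y : EuclideanSpace ℝ (Fin n) => ‖y‖ ^ p')) = DN :=
      funext fun x => fderiv_norm_rpow x hp'1
    rwa [h3] at h2
  have hDNself : ∀ x : EuclideanSpace ℝ (Fin n), DN x x = p' * ‖x‖ ^ p' := by
    intro x
    by_cases hx : x = 0
    · simp [hDNdef, hx, Real.zero_rpow (ne_of_gt hp'0)]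
    · have hx0 : (0:ℝ) < ‖x‖ := norm_pos_iff.mpr hx
      simp only [hDNdef, ContinuousLinearMap.smul_apply, innerSL_apply_apply, smul_eq_mul]
      rw [real_inner_self_eq_norm_sq, mul_assoc, ← Real.rpow_natCast ‖x‖ 2,
        ← Real.rpow_add hx0]
      norm_num
  -- v and its derivative
  have hveq : v = fun x : EuclideanSpace ℝ (Fin n) => a₀ * (1 + ‖x‖ ^ p') ^ (-γ) := funext hv
  set Dv : EuclideanSpace ℝ (Fin n) → (EuclideanSpace ℝ (Fin n) →L[ℝ] ℝ) :=
    fun x => (a₀ * (-γ * (1 + ‖x‖ ^ p') ^ (-γ - 1))) • DN x with hDvdef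
  have hvd : ∀ x : EuclideanSpace ℝ (Fin n), HasFDerivAt v (Dv x) x := by
    intro x
    rw [hveq]
    have hbase : HasDerivAt (fun t : ℝ => 1 + t) 1 (‖x‖ ^ p') := (hasDerivAt_id _).const_add 1
    have houter := (hbase.rpow_const (p := -γ) (Or.inl (ne_of_gt (hu x)))).const_mul a₀
    have hcomp := houter.comp_hasFDerivAt x (hN x)
    refine hcomp.congr_fderiv ?_
    show _ = (a₀ * (-γ * (1 + ‖x‖ ^ p') ^ (-γ - 1))) • DN x
    congr 1
    ring
  have hfv : ∀ x, fderiv ℝ v x = Dv x := fun x => (hvd x).fderiv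
  have hvcont : Continuous v := by
    rw [continuous_iff_continuousAt]; exact fun x => (hvd x).continuousAt
  have hvpos : ∀ x, 0 < v x := by
    intro x
    rw [hv x]
    exact mul_pos ha₀ (Real.rpow_pos_of_pos (hu x) _)
  -- norm of the derivative of v
  set e₁ : EuclideanSpace ℝ (Fin n) → ℝ :=
    fun x => a₀ * γ * p' * (‖x‖ ^ (p' - 1) * (1 + ‖x‖ ^ p') ^ (-γ - 1)) with he₁def
  have hnormDv : ∀ x, ‖fderiv ℝ v x‖ = e₁ x := by
    intro x
    rw [hfv x]
    simp only [hDvdef, hDNdef]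
    rw [norm_smul, norm_smul, innerSL_apply_norm]
    have hC : (0:ℝ) < (1 + ‖x‖ ^ p') ^ (-γ - 1) := Real.rpow_pos_of_pos (hu x) _
    by_cases hx : x = 0
    · simp [he₁def, hx, Real.zero_rpow (by linarith : p' - 1 ≠ 0)]
    · have hx0 : (0:ℝ) < ‖x‖ := norm_pos_iff.mpr hx
      have h1 : |a₀ * (-γ * (1 + ‖x‖ ^ p') ^ (-γ - 1))| = a₀ * γ * (1 + ‖x‖ ^ p') ^ (-γ - 1) := by
        rw [show a₀ * (-γ * (1 + ‖x‖ ^ p') ^ (-γ - 1))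
            = -(a₀ * γ * (1 + ‖x‖ ^ p') ^ (-γ - 1)) by ring, abs_neg,
          abs_of_pos (by positivity)]
      have h2 : |p' * ‖x‖ ^ (p' - 2)| = p' * ‖x‖ ^ (p' - 2) := by
        have : (0:ℝ) < ‖x‖ ^ (p' - 2) := Real.rpow_pos_of_pos hx0 _
        rw [abs_of_pos (by positivity)]
      rw [Real.norm_eq_abs, Real.norm_eq_abs, h1, h2]
      simp only [he₁def]
      have h3 : ‖x‖ ^ (p' - 1) = ‖x‖ ^ (p' - 2) * ‖x‖ := by
        rw [show p' - 1 = (p' - 2) + 1 by ring, Real.rpow_add_one (ne_of_gt hx0)]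
      rw [h3]
      ring
  have he₁pos : ∀ x : EuclideanSpace ℝ (Fin n), x ≠ 0 → 0 < e₁ x := by
    intro x hx
    have hx0 : (0:ℝ) < ‖x‖ := norm_pos_iff.mpr hx
    have h1 : (0:ℝ) < ‖x‖ ^ (p' - 1) := Real.rpow_pos_of_pos hx0 _
    have h2 : (0:ℝ) < (1 + ‖x‖ ^ p') ^ (-γ - 1) := Real.rpow_pos_of_pos (hu x) _
    rw [he₁def]
    positivity
  have he₁cont : Continuous e₁ := by
    apply continuous_const.mul
    apply Continuous.mul
    · exact Continuous.rpow_const continuous_norm (fun y => Or.inr (by linarith))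
    · exact Continuous.rpow_const (continuous_const.add hNcont) (fun y => Or.inl (ne_of_gt (hu y)))
  -- A and its derivative
  set A : EuclideanSpace ℝ (Fin n) → ℝ := fun x => (1 + ‖x‖ ^ p') ^ (-σ) with hAdef
  set DA : EuclideanSpace ℝ (Fin n) → (EuclideanSpace ℝ (Fin n) →L[ℝ] ℝ) :=
    fun x => (-σ * (1 + ‖x‖ ^ p') ^ (-σ - 1)) • DN x with hDAdef
  have hAd : ∀ x : EuclideanSpace ℝ (Fin n), HasFDerivAt A (DA x) x := by
    intro x
    have hbase : HasDerivAt (fun t : ℝ => 1 + t) 1 (‖x‖ ^ p') := (hasDerivAt_id _).const_add 1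
    have houter := hbase.rpow_const (p := -σ) (Or.inl (ne_of_gt (hu x)))
    have hcomp := houter.comp_hasFDerivAt x (hN x)
    refine hcomp.congr_fderiv ?_
    show _ = (-σ * (1 + ‖x‖ ^ p') ^ (-σ - 1)) • DN x
    congr 1
    ring
  have hApos : ∀ x, 0 < A x := fun x => Real.rpow_pos_of_pos (hu x) _
  have hAcont : Continuous A :=
    Continuous.rpow_const (continuous_const.add hNcont) (fun y => Or.inl (ne_of_gt (hu y)))
  have hDAcont : Continuous DA := by
    apply Continuous.fun_smul _ hDNcont
    exact continuous_const.mul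
      (Continuous.rpow_const (continuous_const.add hNcont) (fun y => Or.inl (ne_of_gt (hu y))))
  -- facts about φ
  have hφd : ∀ x : EuclideanSpace ℝ (Fin n), HasFDerivAt φ (fderiv ℝ φ x) x :=
    fun x => (hφ1.differentiable one_ne_zero x).hasFDerivAt
  have hφcont : Continuous φ := hφ1.continuous
  have hfφcont : Continuous (fun x => fderiv ℝ φ x) := hφ1.continuous_fderiv one_ne_zero
  have hφzero : ∀ x, x ∉ tsupport φ → φ x = 0 := fun x hx => image_eq_zero_of_notMem_tsupport hx
  have hfφzero : ∀ x, x ∉ tsupport φ → fderiv ℝ φ x = 0 := by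
    intro x hx
    have hev : φ =ᶠ[nhds x] (fun _ => (0 : ℝ)) := by
      filter_upwards [(isClosed_tsupport φ).isOpen_compl.mem_nhds hx] with y hy
      exact image_eq_zero_of_notMem_tsupport hy
    rw [hev.fderiv_eq, fderiv_fun_const]; rfl
  -- the function c and its derivative
  set cf : EuclideanSpace ℝ (Fin n) → ℝ := fun x => (φ x * φ x) * (K * A x) with hcfdef
  set Dc : EuclideanSpace ℝ (Fin n) → (EuclideanSpace ℝ (Fin n) →L[ℝ] ℝ) :=
    fun x => (φ x * φ x) • (K • DA x) + (K * A x) • (φ x • fderiv ℝ φ x + φ x • fderiv ℝ φ x)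
    with hDcdef
  have hcd : ∀ x, HasFDerivAt cf (Dc x) x :=
    fun x => ((hφd x).mul (hφd x)).mul ((hAd x).const_mul K)
  have hcfcont : Continuous cf :=
    (hφcont.mul hφcont).mul (continuous_const.mul hAcont)
  have hDccont : Continuous Dc := by
    apply Continuous.add
    · exact (hφcont.mul hφcont).smul (hDAcont.const_smul K)
    · exact (continuous_const.mul hAcont).smul
        ((hφcont.smul hfφcont).add (hφcont.smul hfφcont))
  have hcfzero : ∀ x, x ∉ tsupport φ → cf x = 0 := by
    intro x hx; simp [hcfdef, hφzero x hx]
  have hDczero : ∀ x, x ∉ tsupport φ → Dc x = 0 := by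
    intro x hx; simp [hDcdef, hφzero x hx, hfφzero x hx]
  -- the vector field components and their derivatives
  set g : Fin n → EuclideanSpace ℝ (Fin n) → ℝ := fun i x => cf x * x i with hgdef
  set Dg : Fin n → EuclideanSpace ℝ (Fin n) → (EuclideanSpace ℝ (Fin n) →L[ℝ] ℝ) :=
    fun i x => (cf x) • (EuclideanSpace.proj i) + (x i) • Dc x with hDgdef
  have hgd : ∀ i x, HasFDerivAt (g i) (Dg i x) x := by
    intro i x
    exact (hcd x).mul ((EuclideanSpace.proj (𝕜 := ℝ) i).hasFDerivAt)
  have hDgcont : ∀ i, Continuous (Dg i) := by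
    intro i
    apply Continuous.add
    · exact hcfcont.smul continuous_const
    · exact ((EuclideanSpace.proj (𝕜 := ℝ) i).continuous).smul hDccont
  have hgsupp : ∀ i, HasCompactSupport (g i) := by
    intro i
    apply HasCompactSupport.intro hφc
    intro x hx
    simp [hgdef, hcfzero x hx]
  have hIBPi : ∀ i, ∫ x, Dg i x (EuclideanSpace.single i (1:ℝ)) = 0 :=
    fun i => ibp_zero (g i) (Dg i) (hgd i) (hDgcont i) (hgsupp i) _
  have hintDg : ∀ i, Integrable (fun x => Dg i x (EuclideanSpace.single i (1:ℝ))) := by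
    intro i
    apply Continuous.integrable_of_hasCompactSupport
    · exact (hDgcont i).clm_apply continuous_const
    · apply HasCompactSupport.intro hφc
      intro x hx
      simp [hDgdef, hcfzero x hx, hDczero x hx]
  have hsum0 : ∫ x, (∑ i, Dg i x (EuclideanSpace.single i (1:ℝ))) = 0 := by
    rw [integral_finset_sum _ (fun i _ => hintDg i)]
    simp [hIBPi]
  -- key algebraic identities
  have hσp' : (n:ℝ) - σ * p' = γ * p' := by
    rw [hσdef, hγdef, hp'def]
    field_simp
    ring
  have hγq : γ * (q - 2) = σ + 1 := by
    rw [hσdef, hγdef, hq]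
    field_simp
    ring
  have hc₀a : c₀ * a₀ ^ (q - 2) = n * K := by
    rw [hc₀def, mul_assoc, ← Real.rpow_add ha₀]
    norm_num
  have hvq : ∀ x : EuclideanSpace ℝ (Fin n),
      v x ^ (q - 2) = a₀ ^ (q - 2) * (1 + ‖x‖ ^ p') ^ (-σ - 1) := by
    intro x
    rw [hv x]
    rw [Real.mul_rpow ha₀.le (Real.rpow_nonneg (hu x).le _), ← Real.rpow_mul (hu x).le]
    congr 1
    have : -γ * (q - 2) = -(γ * (q - 2)) := by ring
    rw [this, hγq]
    ring
  -- pointwise divergence identity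
  set Rf : EuclideanSpace ℝ (Fin n) → ℝ := fun x =>
    (K * γ * p') * (‖x‖ ^ p' * (1 + ‖x‖ ^ p') ^ (-σ - 1)) * φ x ^ 2
      + 2 * (K * A x) * φ x * (fderiv ℝ φ x x) with hRfdef
  have hdivpt : ∀ x : EuclideanSpace ℝ (Fin n),
      (∑ i, Dg i x (EuclideanSpace.single i (1:ℝ)))
        = c₀ * (v x ^ (q - 2) * φ x ^ 2) + Rf x := by
    intro x
    have hxrepr : (∑ i, x i • EuclideanSpace.single i (1:ℝ)) = x := by
      apply PiLp.ext
      intro j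
      simp only [PiLp.smul_apply, EuclideanSpace.single_apply, smul_eq_mul, mul_ite, mul_one,
        mul_zero]
      rw [WithLp.ofLp_sum, Finset.sum_apply]
      simp [Pi.single_apply]
    have h1 : ∀ i, Dg i x (EuclideanSpace.single i (1:ℝ))
        = cf x + x i * (Dc x (EuclideanSpace.single i (1:ℝ))) := by
      intro i
      show (cf x) • (EuclideanSpace.proj i) (EuclideanSpace.single i (1:ℝ))
          + (x i) • (Dc x (EuclideanSpace.single i (1:ℝ)))
          = _
      simp [PiLp.proj_apply, EuclideanSpace.single_apply]
    have h2 : (∑ i, Dg i x (EuclideanSpace.single i (1:ℝ))) = n * cf x + Dc x x := by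
      rw [Finset.sum_congr rfl (fun i _ => h1 i), Finset.sum_add_distrib]
      congr 1
      · simp [Finset.sum_const, Finset.card_univ, mul_comm]
      · calc (∑ i, x i * (Dc x (EuclideanSpace.single i (1:ℝ))))
            = ∑ i, Dc x (x i • EuclideanSpace.single i (1:ℝ)) := by
              simp [ContinuousLinearMap.map_smul, smul_eq_mul]
          _ = Dc x (∑ i, x i • EuclideanSpace.single i (1:ℝ)) := by
              rw [map_sum]
          _ = Dc x x := by rw [hxrepr]
    rw [h2]
    -- compute Dc x x
    have h3 : Dc x x = (φ x * φ x) * (K * (-σ * (1 + ‖x‖ ^ p') ^ (-σ - 1) * (p' * ‖x‖ ^ p')))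
        + (K * A x) * (2 * φ x * (fderiv ℝ φ x x)) := by
      show ((φ x * φ x) • (K • DA x) + (K * A x) • (φ x • fderiv ℝ φ x + φ x • fderiv ℝ φ x)) x
          = _
      simp only [ContinuousLinearMap.add_apply, ContinuousLinearMap.smul_apply, smul_eq_mul]
      have : DA x x = -σ * (1 + ‖x‖ ^ p') ^ (-σ - 1) * (p' * ‖x‖ ^ p') := by
        show ((-σ * (1 + ‖x‖ ^ p') ^ (-σ - 1)) • DN x) x = _
        rw [ContinuousLinearMap.smul_apply, smul_eq_mul, hDNself x]
      rw [this]
      ring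
    rw [h3]
    -- now pure algebra
    have hA1 : A x = (1 + ‖x‖ ^ p') ^ (-σ - 1) * (1 + ‖x‖ ^ p') := by
      have h := Real.rpow_add_one (ne_of_gt (hu x)) (-σ - 1)
      simp only [hAdef]
      rw [← h]
      congr 1
      ring
    simp only [hvq x, hcfdef, hRfdef, hA1]
    have haa : a₀ ^ (2 - q) * a₀ ^ (q - 2) = 1 := by
      rw [← Real.rpow_add ha₀]; norm_num
    linear_combination (φ x ^ 2 * ((1 + ‖x‖ ^ p') ^ (-σ - 1)) * K * ‖x‖ ^ p') * hσp'
      - (φ x ^ 2 * ((1 + ‖x‖ ^ p') ^ (-σ - 1))) * hc₀a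
  -- integrability of the pieces
  have hVint : Integrable (fun x : EuclideanSpace ℝ (Fin n) => v x ^ (q - 2) * φ x ^ 2) := by
    apply Continuous.integrable_of_hasCompactSupport
    · exact (Continuous.rpow_const hvcont (fun x => Or.inl (hvpos x).ne')).mul (hφcont.pow 2)
    · apply HasCompactSupport.intro hφc
      intro x hx
      simp [hφzero x hx]
  have hRfcont : Continuous Rf := by
    rw [hRfdef]
    apply Continuous.add
    · apply Continuous.mul _ (hφcont.pow 2)
      exact continuous_const.mul (hNcont.mul (Continuous.rpow_const
        (continuous_const.add hNcont) (fun y => Or.inl (ne_of_gt (hu y)))))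
    · apply Continuous.mul
      · exact (continuous_const.mul (continuous_const.mul hAcont)).mul hφcont
      · exact hfφcont.clm_apply continuous_id
  have hRfint : Integrable Rf := by
    apply hRfcont.integrable_of_hasCompactSupport
    apply HasCompactSupport.intro hφc
    intro x hx
    simp [hRfdef, hφzero x hx]
  have hzero : c₀ * (∫ x, v x ^ (q - 2) * φ x ^ 2) + ∫ x, Rf x = 0 := by
    have h1 : (fun x : EuclideanSpace ℝ (Fin n) => ∑ i, Dg i x (EuclideanSpace.single i (1:ℝ)))
        = fun x => c₀ * (v x ^ (q - 2) * φ x ^ 2) + Rf x := funext hdivpt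
    rw [h1] at hsum0
    rw [integral_add (hVint.const_mul c₀) hRfint, integral_const_mul] at hsum0
    exact hsum0
  -- the derivative of φ vanishes near the origin
  have hfφball : ∀ y : EuclideanSpace ℝ (Fin n), ‖y‖ < r₀ → fderiv ℝ φ y = 0 := by
    intro y hy
    have hev : φ =ᶠ[nhds y] (fun _ => φ 0) := by
      filter_upwards [Metric.isOpen_ball.mem_nhds
        (show y ∈ Metric.ball (0 : EuclideanSpace ℝ (Fin n)) r₀ by
          simpa [mem_ball_zero_iff] using hy)] with z hz
      exact hφr z (mem_ball_zero_iff.mp hz)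
    rw [hev.fderiv_eq, fderiv_fun_const]; rfl
  -- the right-hand side weight
  set G₂ : EuclideanSpace ℝ (Fin n) → ℝ :=
    fun x => ‖fderiv ℝ v x‖ ^ (p - 2) * ‖fderiv ℝ φ x‖ ^ 2 with hG₂def
  have hG₂cont : Continuous G₂ := by
    rw [continuous_iff_continuousAt]
    intro x
    by_cases hx : ‖x‖ < r₀
    · have hev0 : G₂ =ᶠ[nhds x] (fun _ => (0:ℝ)) := by
        filter_upwards [Metric.isOpen_ball.mem_nhds
          (show x ∈ Metric.ball (0 : EuclideanSpace ℝ (Fin n)) r₀ by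
            simpa [mem_ball_zero_iff] using hx)] with z hz
        simp [hG₂def, hfφball z (mem_ball_zero_iff.mp hz)]
      exact (continuousAt_congr hev0).mpr continuousAt_const
    · have hx0 : x ≠ 0 := by
        intro h0
        apply hx
        rw [h0, norm_zero]
        exact hr₀pos
      simp only [hG₂def]
      apply ContinuousAt.mul
      · have hfun : (fun y : EuclideanSpace ℝ (Fin n) => ‖fderiv ℝ v y‖ ^ (p - 2))
            = fun y => (e₁ y) ^ (p - 2) := funext fun y => by rw [hnormDv y]
        rw [hfun]
        exact (he₁cont.continuousAt).rpow_const (Or.inl (ne_of_gt (he₁pos x hx0)))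
      · exact ((hfφcont.norm).pow 2).continuousAt
  have hG₂int : Integrable G₂ := by
    apply hG₂cont.integrable_of_hasCompactSupport
    apply HasCompactSupport.intro hφc
    intro x hx
    simp [hG₂def, hfφzero x hx]
  -- the pointwise AM-GM estimate
  have hpw : ∀ x : EuclideanSpace ℝ (Fin n), -Rf x ≤ G₂ x := by
    intro x
    by_cases hx : x = 0
    · have h0 : Rf (0 : EuclideanSpace ℝ (Fin n)) = 0 := by
        simp only [hRfdef]
        rw [norm_zero, Real.zero_rpow (ne_of_gt hp'0)]
        simp
      rw [hx, h0]
      simp only [hG₂def, neg_zero]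
      have h1 : (0:ℝ) ≤ ‖fderiv ℝ v 0‖ ^ (p - 2) := Real.rpow_nonneg (norm_nonneg _) _
      positivity
    · have hx0 : (0:ℝ) < ‖x‖ := norm_pos_iff.mpr hx
      have hupos := hu x
      have hApx := hApos x
      have hw : (0:ℝ) < ‖fderiv ℝ v x‖ ^ (p - 2) := by
        apply Real.rpow_pos_of_pos
        rw [hnormDv x]
        exact he₁pos x hx
      -- the key identity
      have hcoef : K * γ * p' * (a₀ * γ * p') ^ (p - 2) = K * K := by
        have hsplit : (a₀ * γ * p') ^ (p - 2) = a₀ ^ (p - 2) * (γ * p') ^ (p - 2) := by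
          rw [show a₀ * γ * p' = a₀ * (γ * p') by ring, Real.mul_rpow ha₀.le hγp'.le]
        have hmerge : (γ * p') ^ (p - 2) * (γ * p') = (γ * p') ^ (p - 1) := by
          rw [← Real.rpow_add_one (ne_of_gt hγp')]
          congr 1
          ring
        rw [hsplit, hKdef]
        linear_combination (a₀ ^ (p - 2) * a₀ ^ (p - 2) * ((γ * p') ^ (p - 1))) * hmerge
      have hr2 : ‖x‖ ^ p' * ‖x‖ ^ ((p' - 1) * (p - 2)) = ‖x‖ * ‖x‖ := by
        rw [← Real.rpow_add hx0]
        have h2 : p' + (p' - 1) * (p - 2) = 2 := by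
          rw [hp'def]
          field_simp
          ring
        rw [h2, show ((2:ℝ) : ℝ) = ((2:ℕ) : ℝ) by norm_num, Real.rpow_natCast]
        ring
      have hu2 : (1 + ‖x‖ ^ p') ^ (-σ - 1) * (1 + ‖x‖ ^ p') ^ ((-γ - 1) * (p - 2))
          = (1 + ‖x‖ ^ p') ^ (-σ) * (1 + ‖x‖ ^ p') ^ (-σ) := by
        rw [← Real.rpow_add hupos, ← Real.rpow_add hupos]
        congr 1
        rw [hσdef]
        ring
      have hIII : (K * A x * ‖x‖) ^ 2
          = (K * γ * p') * (‖x‖ ^ p' * (1 + ‖x‖ ^ p') ^ (-σ - 1))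
            * (‖fderiv ℝ v x‖ ^ (p - 2)) := by
        rw [hnormDv x]
        simp only [he₁def, hAdef]
        rw [Real.mul_rpow (by positivity)
            (mul_nonneg (Real.rpow_nonneg (norm_nonneg x) _)
              (Real.rpow_nonneg hupos.le _)),
          Real.mul_rpow (Real.rpow_nonneg (norm_nonneg x) _) (Real.rpow_nonneg hupos.le _),
          ← Real.rpow_mul (norm_nonneg x), ← Real.rpow_mul hupos.le]
        have hstep : (K * γ * p' * (a₀ * γ * p') ^ (p - 2))
            * ((‖x‖ ^ p' * ‖x‖ ^ ((p' - 1) * (p - 2)))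
              * ((1 + ‖x‖ ^ p') ^ (-σ - 1) * (1 + ‖x‖ ^ p') ^ ((-γ - 1) * (p - 2))))
            = (K * K) * ((‖x‖ * ‖x‖)
              * ((1 + ‖x‖ ^ p') ^ (-σ) * (1 + ‖x‖ ^ p') ^ (-σ))) := by
          rw [hcoef, hr2, hu2]
        linear_combination -hstep
      have hm0 : 0 ≤ (K * γ * p') * (‖x‖ ^ p' * (1 + ‖x‖ ^ p') ^ (-σ - 1)) := by
        have h1 : (0:ℝ) ≤ ‖x‖ ^ p' := Real.rpow_nonneg (norm_nonneg x) _
        have h2 : (0:ℝ) ≤ (1 + ‖x‖ ^ p') ^ (-σ - 1) := (Real.rpow_pos_of_pos hupos _).le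
        positivity
      have ha0 : 0 ≤ K * A x * ‖x‖ := by positivity
      have hLx : |fderiv ℝ φ x x| ≤ ‖fderiv ℝ φ x‖ * ‖x‖ := (fderiv ℝ φ x).le_opNorm x
      have h1 : -(2 * (K * A x) * φ x * (fderiv ℝ φ x x))
          ≤ 2 * (K * A x * ‖x‖) * (|φ x| * ‖fderiv ℝ φ x‖) := by
        refine le_trans (neg_le_abs _) ?_
        rw [abs_mul, abs_mul, abs_mul]
        rw [show |(2:ℝ)| = 2 by norm_num, abs_of_pos (by positivity : (0:ℝ) < K * A x)]
        calc 2 * (K * A x) * |φ x| * |fderiv ℝ φ x x|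
            ≤ 2 * (K * A x) * |φ x| * (‖fderiv ℝ φ x‖ * ‖x‖) := by
              apply mul_le_mul_of_nonneg_left hLx (by positivity)
          _ = 2 * (K * A x * ‖x‖) * (|φ x| * ‖fderiv ℝ φ x‖) := by ring
      have h2 : 2 * (K * A x * ‖x‖) * (|φ x| * ‖fderiv ℝ φ x‖)
          ≤ ((K * γ * p') * (‖x‖ ^ p' * (1 + ‖x‖ ^ p') ^ (-σ - 1))) * φ x ^ 2
            + (‖fderiv ℝ v x‖ ^ (p - 2)) * ‖fderiv ℝ φ x‖ ^ 2 :=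
        amgm_aux hw hm0 ha0 (norm_nonneg _) hIII
      simp only [hRfdef, hG₂def]
      linarith [h1, h2]
  -- conclusion
  have hle : c₀ * (∫ x, v x ^ (q - 2) * φ x ^ 2) ≤ ∫ x, G₂ x := by
    have h2 : c₀ * (∫ x, v x ^ (q - 2) * φ x ^ 2) = ∫ x, -Rf x := by
      rw [integral_neg]
      linarith [hzero]
    rw [h2]
    exact integral_mono hRfint.neg hG₂int (fun x => hpw x)
  rw [one_div, inv_mul_eq_div]
  rw [le_div_iff₀ hc₀]
  calc (∫ x, v x ^ (q - 2) * φ x ^ 2) * c₀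
      = c₀ * (∫ x, v x ^ (q - 2) * φ x ^ 2) := by ring
    _ ≤ ∫ x, G₂ x := hle
end

section
/- Let 1 < p ≤ 2n/(n+2) and let ε₀ > 0. Then there exists ζ = ζ(ε₀) > 0 small enough so that for all nonnegative reals ε, r, a, b with ε ∈ (0,1) and ε a ≤ ζ (1 + r^{p/(p-1)})^{1 - n/p}, the following holds: (1 + r^{p/(p-1)})^{(1 - n/p)(p*-2) + p - 1} [ a² ζ^p r^{p/(p-1)} (1 + r^{p/(p-1)})^{-p} + a² ε^p b^p (1 + r^{p/(p-1)})^{n-p} + a^{2-p} b^p ] ≤ ε₀ (1 + r^{p/(p-1)})^{(1 - n/p)(p*-2)} a² + C(ε₀, n, p) (1 + r)^{-p/(p-1)} ( (1 + r^{p/(p-1)})^{-n/p} r^{1/(p-1)} + ε b )^{p-2} b², for some constant C(ε₀, n, p) > 0. -/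
set_option maxHeartbeats 1000000 in
theorem stmt_16 (n : ℕ) (hn : 2 ≤ n) (p : ℝ) (hp1 : 1 < p)
    (hp2 : p ≤ 2 * n / (n + 2))
    (q : ℝ) (hq : q = n * p / (n - p))
    (ε₀ : ℝ) (hε₀ : 0 < ε₀) :
    ∃ ζ : ℝ, 0 < ζ ∧ ∃ C : ℝ, 0 < C ∧
      ∀ ε r a b : ℝ, 0 < ε → ε < 1 → 0 ≤ r → 0 ≤ a → 0 ≤ b →
        ε * a ≤ ζ * (1 + r ^ (p / (p - 1))) ^ (1 - n / p) →
        (1 + r ^ (p / (p - 1))) ^ ((1 - n / p) * (q - 2) + p - 1) *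
            (a ^ 2 * ζ ^ p * r ^ (p / (p - 1)) * (1 + r ^ (p / (p - 1))) ^ (-p)
              + a ^ 2 * ε ^ p * b ^ p * (1 + r ^ (p / (p - 1))) ^ ((n : ℝ) - p)
              + a ^ (2 - p) * b ^ p)
          ≤ ε₀ * (1 + r ^ (p / (p - 1))) ^ ((1 - n / p) * (q - 2)) * a ^ 2
            + C * (1 + r) ^ (-(p / (p - 1))) *
                ((1 + r ^ (p / (p - 1))) ^ (-((n : ℝ) / p)) * r ^ (1 / (p - 1)) + ε * b) ^ (p - 2)
                * b ^ 2 := by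
  have hp0 : (0:ℝ) < p := by linarith
  have hp0' : p ≠ 0 := ne_of_gt hp0
  have hpm1 : (0:ℝ) < p - 1 := by linarith
  have hn2 : (2:ℝ) ≤ (n:ℝ) := by exact_mod_cast hn
  have hp2d : p < 2 := by
    have h : 2 * (n:ℝ) / ((n:ℝ) + 2) < 2 := by
      rw [div_lt_iff₀ (by linarith)]; linarith
    calc p ≤ 2 * (n:ℝ) / ((n:ℝ) + 2) := by exact_mod_cast hp2
      _ < 2 := h
  have h2p : (2:ℝ) - p ≠ 0 := by intro h; linarith
  have hpn : p < (n:ℝ) := by linarith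
  have hnp' : (n:ℝ) - p ≠ 0 := ne_of_gt (by linarith)
  have hA : (1 - (n:ℝ)/p) * (q - 2) = 2*(n:ℝ)/p - (n:ℝ) - 2 := by
    subst hq; field_simp; ring
  -- constants
  set ζ : ℝ := min 1 (ε₀ / 3) with hζdef
  have hζ0 : 0 < ζ := lt_min one_pos (by linarith)
  have hζ1 : ζ ≤ 1 := min_le_left _ _
  have hζε : ζ ≤ ε₀ / 3 := min_le_right _ _
  set δ0 : ℝ := 2 / (2 - p) * (ε₀ / 3) with hδ0def
  have hδ0 : 0 < δ0 := mul_pos (div_pos two_pos (by linarith)) (by linarith)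
  set Cδ : ℝ := p / 2 * δ0 ^ (-((2 - p) / p)) with hCδdef
  have hCδ : 0 < Cδ := mul_pos (by positivity) (Real.rpow_pos_of_pos hδ0 _)
  set C : ℝ := 2 ^ ((3:ℝ) - p) * 2 ^ (p / (p - 1)) * (1 + Cδ) with hCdef
  have hC : 0 < C := by positivity
  refine ⟨ζ, hζ0, C, hC, ?_⟩
  intro ε r a b hε hε1 hr ha hb hgrow
  set P : ℝ := p / (p - 1) with hP
  have hPpos : 0 < P := div_pos hp0 hpm1
  set s : ℝ := r ^ P with hs
  have hs0 : 0 ≤ s := Real.rpow_nonneg hr _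
  set R : ℝ := 1 + s with hRdef
  have hR1 : 1 ≤ R := by rw [hRdef]; linarith
  have hR0 : (0:ℝ) < R := by linarith
  have hsR : s ≤ R := by rw [hRdef]; linarith
  set A : ℝ := (1 - (n:ℝ)/p) * (q - 2) with hAdef
  set X : ℝ := R ^ (-((n:ℝ)/p)) * r ^ (1/(p-1)) with hX
  have hX0 : 0 ≤ X := mul_nonneg (Real.rpow_nonneg hR0.le _) (Real.rpow_nonneg hr _)
  have hζp1 : ζ ^ p ≤ 1 := Real.rpow_le_one hζ0.le hζ1 hp0.le
  have hζpε : ζ ^ p ≤ ε₀ / 3 := by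
    calc ζ ^ p ≤ ζ ^ (1:ℝ) := Real.rpow_le_rpow_of_exponent_ge hζ0 hζ1 hp1.le
      _ = ζ := Real.rpow_one ζ
      _ ≤ ε₀ / 3 := hζε
  have hC2 : 0 < C / 2 := by linarith
  -- key constant identity
  have hCkey : C / 2 * 2 ^ (-P) * 2 ^ (p - 2) = 1 + Cδ := by
    have h1 : (2:ℝ) ^ (p-2) = ((2:ℝ) ^ ((2:ℝ)-p))⁻¹ := by
      rw [show p - 2 = -((2:ℝ)-p) by ring, Real.rpow_neg (by norm_num)]
    have h2 : (2:ℝ) ^ (-P) = ((2:ℝ) ^ P)⁻¹ := by rw [Real.rpow_neg (by norm_num)]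
    have h3 : (2:ℝ) ^ ((3:ℝ)-p) = 2 * (2:ℝ) ^ ((2:ℝ)-p) := by
      rw [show (3:ℝ)-p = 1+((2:ℝ)-p) by ring, Real.rpow_add two_pos, Real.rpow_one]
    have hc1 : (0:ℝ) < (2:ℝ) ^ ((2:ℝ)-p) := Real.rpow_pos_of_pos two_pos _
    have hc2 : (0:ℝ) < (2:ℝ) ^ P := Real.rpow_pos_of_pos two_pos _
    rw [hCdef, h1, h2, h3]
    field_simp
  -- comparison of (1+r)^P with R
  have h1r : (1+r)^P ≤ 2^P * R := by
    rcases le_total r 1 with h | h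
    · calc (1+r)^P ≤ (2:ℝ)^P := Real.rpow_le_rpow (by linarith) (by linarith) hPpos.le
        _ = 2^P * 1 := (mul_one _).symm
        _ ≤ 2^P * R := by
            apply mul_le_mul_of_nonneg_left hR1 (Real.rpow_nonneg (by norm_num) _)
    · calc (1+r)^P ≤ (2*r)^P := Real.rpow_le_rpow (by linarith) (by linarith) hPpos.le
        _ = 2^P * r^P := Real.mul_rpow (by norm_num) hr
        _ ≤ 2^P * R := by
            apply mul_le_mul_of_nonneg_left _ (Real.rpow_nonneg (by norm_num) _)
            rw [← hs, hRdef]; linarith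
  have hinv1r : 2^(-P) * R⁻¹ ≤ (1+r)^(-P) := by
    have hpos : (0:ℝ) < (1+r)^P := Real.rpow_pos_of_pos (by linarith) _
    rw [Real.rpow_neg (by linarith : (0:ℝ) ≤ 1+r), Real.rpow_neg (by norm_num : (0:ℝ) ≤ 2)]
    rw [← mul_inv]
    exact inv_anti₀ hpos h1r
  -- Bound 1
  have B1 : R ^ (A + p - 1) * (a^2 * ζ^p * s * R^(-p)) ≤ ε₀/3 * R^A * a^2 := by
    have e1 : R ^ (A + p - 1) * R ^ (-p) = R ^ (A - 1) := by
      rw [← Real.rpow_add hR0]; congr 1; ring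
    calc R ^ (A + p - 1) * (a^2 * ζ^p * s * R^(-p))
        = a^2 * ζ^p * (s * (R ^ (A + p - 1) * R ^ (-p))) := by ring
      _ = a^2 * ζ^p * (s * R ^ (A - 1)) := by rw [e1]
      _ ≤ a^2 * ζ^p * (R * R ^ (A - 1)) := by
          apply mul_le_mul_of_nonneg_left
            (mul_le_mul_of_nonneg_right hsR (Real.rpow_nonneg hR0.le _))
          positivity
      _ = a^2 * ζ^p * R ^ A := by
          congr 1
          calc R * R ^ (A - 1) = R ^ (1:ℝ) * R ^ (A-1) := by rw [Real.rpow_one]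
            _ = R ^ (1 + (A-1)) := (Real.rpow_add hR0 _ _).symm
            _ = R ^ A := by congr 1; ring
      _ = ζ^p * (a^2 * R ^ A) := by ring
      _ ≤ ε₀/3 * (a^2 * R ^ A) := mul_le_mul_of_nonneg_right hζpε (by positivity)
      _ = ε₀/3 * R^A * a^2 := by ring
  -- Bound 2
  have B2 : a^2 * ε^p * b^p * R^((n:ℝ)-p) ≤ a^(2-p) * b^p := by
    rcases eq_or_lt_of_le ha with ha0 | ha0
    · rw [← ha0, Real.zero_rpow (by intro h; linarith [h] : (2:ℝ)-p ≠ 0)]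
      norm_num
    · have key : ε^p * a^p * R^((n:ℝ)-p) ≤ ζ^p := by
        have h1 : ε^p * a^p = (ε*a)^p := (Real.mul_rpow hε.le ha).symm
        have h2 : (ε*a)^p ≤ ζ^p * R^((1-(n:ℝ)/p)*p) := by
          calc (ε*a)^p ≤ (ζ * R^(1-(n:ℝ)/p))^p :=
                Real.rpow_le_rpow (by positivity) hgrow hp0.le
            _ = ζ^p * (R^(1-(n:ℝ)/p))^p := Real.mul_rpow hζ0.le (Real.rpow_nonneg hR0.le _)
            _ = ζ^p * R^((1-(n:ℝ)/p)*p) := by rw [← Real.rpow_mul hR0.le]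
        have h3 : R^((1-(n:ℝ)/p)*p) * R^((n:ℝ)-p) = 1 := by
          rw [← Real.rpow_add hR0]
          rw [show (1-(n:ℝ)/p)*p + ((n:ℝ)-p) = 0 by field_simp; ring]
          exact Real.rpow_zero R
        calc ε^p * a^p * R^((n:ℝ)-p) = (ε*a)^p * R^((n:ℝ)-p) := by rw [h1]
          _ ≤ ζ^p * R^((1-(n:ℝ)/p)*p) * R^((n:ℝ)-p) := by
              apply mul_le_mul_of_nonneg_right h2 (Real.rpow_nonneg hR0.le _)
          _ = ζ^p * (R^((1-(n:ℝ)/p)*p) * R^((n:ℝ)-p)) := by ring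
          _ = ζ^p := by rw [h3, mul_one]
      have ha2 : a^(2-p) * a^p = a^2 := by
        rw [← Real.rpow_add ha0, show (2:ℝ)-p+p = ((2:ℕ):ℝ) by norm_num,
          Real.rpow_natCast]
      calc a^2 * ε^p * b^p * R^((n:ℝ)-p)
          = a^(2-p) * b^p * (ε^p * a^p * R^((n:ℝ)-p)) := by rw [← ha2]; ring
        _ ≤ a^(2-p) * b^p * ζ^p := by
            apply mul_le_mul_of_nonneg_left key
            positivity
        _ ≤ a^(2-p) * b^p * 1 := by
            apply mul_le_mul_of_nonneg_left hζp1
            positivity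
        _ = a^(2-p) * b^p := mul_one _
  -- Bound 3
  have B3 : R^(A+p-1) * (a^(2-p)*b^p)
      ≤ ε₀/3 * R^A * a^2 + C/2 * (1+r)^(-P) * (X + ε*b)^(p-2) * b^2 := by
    rcases eq_or_lt_of_le hb with hb0 | hb0
    · rw [← hb0]
      rw [Real.zero_rpow hp0']
      norm_num
      positivity
    · rcases le_or_gt X (ε*b) with hcase | hcase
      · -- Case A : X ≤ ε b
        have haub : a ≤ ζ * R^(1 - (n:ℝ)/p) / ε := by
          rw [le_div_iff₀ hε]; linarith [hgrow]
        have hεinv : ε^(p-2) = (ε^((2:ℝ)-p))⁻¹ := by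
          rw [show p-2 = -((2:ℝ)-p) by ring, Real.rpow_neg hε.le]
        have ha2p : a^(2-p) ≤ ζ^((2:ℝ)-p) * R^((1-(n:ℝ)/p)*((2:ℝ)-p)) * ε^(p-2) := by
          calc a^(2-p) ≤ (ζ * R^(1-(n:ℝ)/p)/ε)^((2:ℝ)-p) :=
                Real.rpow_le_rpow ha haub (by linarith)
            _ = ζ^((2:ℝ)-p) * R^((1-(n:ℝ)/p)*((2:ℝ)-p)) * ε^(p-2) := by
                rw [hεinv, Real.div_rpow (by positivity) hε.le,
                  Real.mul_rpow hζ0.le (Real.rpow_nonneg hR0.le _), ← Real.rpow_mul hR0.le]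
                ring
        have eE : R^(A+p-1) * R^((1-(n:ℝ)/p)*((2:ℝ)-p)) = R^(-(1:ℝ)) := by
          rw [← Real.rpow_add hR0]
          congr 1
          rw [hA]; field_simp; ring
        have hζ2p : ζ^((2:ℝ)-p) ≤ 1 := Real.rpow_le_one hζ0.le hζ1 (by linarith)
        have hbp : b^(p-2) * b^2 = b^p := by
          rw [← Real.rpow_natCast b 2, ← Real.rpow_add hb0]
          norm_num
        have hxe : (2*(ε*b))^(p-2) ≤ (X + ε*b)^(p-2) := by
          apply Real.rpow_le_rpow_of_nonpos (by positivity) (by linarith) (by linarith)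
        have hxe2 : (2:ℝ)^(p-2) * ε^(p-2) * b^(p-2) ≤ (X + ε*b)^(p-2) := by
          calc (2:ℝ)^(p-2) * ε^(p-2) * b^(p-2) = (2:ℝ)^(p-2) * (ε*b)^(p-2) := by
                rw [Real.mul_rpow hε.le hb0.le]; ring
            _ = (2*(ε*b))^(p-2) := (Real.mul_rpow (by norm_num) (by positivity)).symm
            _ ≤ (X + ε*b)^(p-2) := hxe
        have main : R^(A+p-1) * (a^(2-p)*b^p) ≤ ε^(p-2) * b^p * R^(-(1:ℝ)) := by
          calc R^(A+p-1) * (a^(2-p)*b^p)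
              ≤ R^(A+p-1) * (ζ^((2:ℝ)-p) * R^((1-(n:ℝ)/p)*((2:ℝ)-p)) * ε^(p-2) * b^p) := by
                apply mul_le_mul_of_nonneg_left _ (Real.rpow_nonneg hR0.le _)
                exact mul_le_mul_of_nonneg_right ha2p (Real.rpow_nonneg hb0.le _)
            _ = ζ^((2:ℝ)-p) * ε^(p-2) * b^p * (R^(A+p-1) * R^((1-(n:ℝ)/p)*((2:ℝ)-p))) := by
                ring
            _ = ζ^((2:ℝ)-p) * (ε^(p-2) * b^p * R^(-(1:ℝ))) := by rw [eE]; ring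
            _ ≤ 1 * (ε^(p-2) * b^p * R^(-(1:ℝ))) :=
                mul_le_mul_of_nonneg_right hζ2p (by positivity)
            _ = ε^(p-2) * b^p * R^(-(1:ℝ)) := one_mul _
        have final : ε^(p-2) * b^p * R^(-(1:ℝ))
            ≤ C/2 * (1+r)^(-P) * (X + ε*b)^(p-2) * b^2 := by
          have step1 : C/2 * (2^(-P) * R⁻¹) * ((2:ℝ)^(p-2) * ε^(p-2) * b^(p-2)) * b^2
              ≤ C/2 * (1+r)^(-P) * (X + ε*b)^(p-2) * b^2 := by
            apply mul_le_mul_of_nonneg_right _ (by positivity)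
            apply mul_le_mul (mul_le_mul_of_nonneg_left hinv1r hC2.le) hxe2 (by positivity)
            positivity
          have eq1 : C/2 * (2^(-P) * R⁻¹) * ((2:ℝ)^(p-2) * ε^(p-2) * b^(p-2)) * b^2
              = (1 + Cδ) * (ε^(p-2) * b^p * R^(-(1:ℝ))) := by
            rw [← hCkey, ← hbp, Real.rpow_neg_one]
            ring
          calc ε^(p-2) * b^p * R^(-(1:ℝ))
              ≤ (1+Cδ) * (ε^(p-2) * b^p * R^(-(1:ℝ))) := by
                have hx : (0:ℝ) ≤ ε^(p-2) * b^p * R^(-(1:ℝ)) := by positivity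
                exact le_mul_of_one_le_left hx (by linarith)
            _ = C/2 * (2^(-P) * R⁻¹) * ((2:ℝ)^(p-2) * ε^(p-2) * b^(p-2)) * b^2 := eq1.symm
            _ ≤ C/2 * (1+r)^(-P) * (X + ε*b)^(p-2) * b^2 := step1
        have hfin : R^(A+p-1) * (a^(2-p)*b^p) ≤ C/2 * (1+r)^(-P) * (X + ε*b)^(p-2) * b^2 :=
          le_trans main final
        have hnn : 0 ≤ ε₀/3 * R^A * a^2 := by positivity
        linarith
      · -- Case B : ε b < X
        set κ : ℝ := δ0 * R ^ (-(p-1)) with hκdef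
        have hκ0 : 0 < κ := mul_pos hδ0 (Real.rpow_pos_of_pos hR0 _)
        set w : ℝ := (p-1)*((2:ℝ)-p)/p with hw
        set F : ℝ := A + p - 1 + w with hF
        have geom := Real.geom_mean_le_arith_mean2_weighted
          (show (0:ℝ) ≤ ((2:ℝ)-p)/2 by linarith) (show (0:ℝ) ≤ p/2 by linarith)
          (show (0:ℝ) ≤ κ * a^2 by positivity)
          (show (0:ℝ) ≤ κ ^ (-(((2:ℝ)-p)/p)) * b^2 by positivity)
          (show ((2:ℝ)-p)/2 + p/2 = 1 by ring)
        have f1 : (κ * a^2) ^ (((2:ℝ)-p)/2) = κ ^ (((2:ℝ)-p)/2) * a ^ ((2:ℝ)-p) := by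
          rw [Real.mul_rpow hκ0.le (sq_nonneg a)]
          congr 1
          rw [← Real.rpow_natCast a 2, ← Real.rpow_mul ha]
          congr 1
          push_cast; ring
        have f2 : (κ ^ (-(((2:ℝ)-p)/p)) * b^2) ^ (p/2)
            = κ ^ (-(((2:ℝ)-p)/2)) * b ^ p := by
          rw [Real.mul_rpow (Real.rpow_nonneg hκ0.le _) (sq_nonneg b)]
          congr 1
          · rw [← Real.rpow_mul hκ0.le]
            congr 1
            field_simp
          · rw [← Real.rpow_natCast b 2, ← Real.rpow_mul hb0.le]
            congr 1
            push_cast; field_simp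
        have hκpair : κ ^ (((2:ℝ)-p)/2) * κ ^ (-(((2:ℝ)-p)/2)) = 1 := by
          rw [← Real.rpow_add hκ0]; simp
        have lhs_eq : (κ * a^2) ^ (((2:ℝ)-p)/2) * (κ ^ (-(((2:ℝ)-p)/p)) * b^2) ^ (p/2)
            = a ^ ((2:ℝ)-p) * b ^ p := by
          rw [f1, f2]
          calc κ ^ (((2:ℝ)-p)/2) * a ^ ((2:ℝ)-p) * (κ ^ (-(((2:ℝ)-p)/2)) * b ^ p)
              = κ ^ (((2:ℝ)-p)/2) * κ ^ (-(((2:ℝ)-p)/2)) * (a ^ ((2:ℝ)-p) * b ^ p) := by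
                ring
            _ = a ^ ((2:ℝ)-p) * b ^ p := by rw [hκpair, one_mul]
        have r1 : ((2:ℝ)-p)/2 * (κ * a^2) = ε₀/3 * R^(-(p-1)) * a^2 := by
          rw [hκdef, hδ0def]; field_simp
        have r2 : p/2 * (κ ^ (-(((2:ℝ)-p)/p)) * b^2) = Cδ * R^w * b^2 := by
          have hh : κ ^ (-(((2:ℝ)-p)/p)) = δ0 ^ (-(((2:ℝ)-p)/p)) * R ^ w := by
            rw [hκdef, Real.mul_rpow hδ0.le (Real.rpow_nonneg hR0.le _),
              ← Real.rpow_mul hR0.le]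
            congr 2
            rw [hw]; field_simp
          rw [hh, hCδdef]; ring
        have young : a ^ ((2:ℝ)-p) * b ^ p
            ≤ ε₀/3 * R^(-(p-1)) * a^2 + Cδ * R^w * b^2 := by
          rw [← r1, ← r2, ← lhs_eq]; exact geom
        have g1 : R^(A+p-1) * R^(-(p-1)) = R^A := by
          rw [← Real.rpow_add hR0]; congr 1; ring
        have g2 : R^(A+p-1) * R^w = R^F := by
          rw [← Real.rpow_add hR0]
        have step1 : R^(A+p-1) * (a^(2-p)*b^p)
            ≤ ε₀/3 * R^A * a^2 + Cδ * R^F * b^2 := by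
          calc R^(A+p-1) * (a^(2-p)*b^p)
              ≤ R^(A+p-1) * (ε₀/3 * R^(-(p-1)) * a^2 + Cδ * R^w * b^2) :=
                mul_le_mul_of_nonneg_left young (Real.rpow_nonneg hR0.le _)
            _ = ε₀/3 * R^A * a^2 + Cδ * R^F * b^2 := by rw [← g1, ← g2]; ring
        have hXpos : 0 < X := lt_trans (mul_pos hε hb0) hcase
        have hX2p : X ^ ((2:ℝ)-p) ≤ R ^ (-(F+1)) := by
          have x1 : X ^ ((2:ℝ)-p)
              = R ^ ((-((n:ℝ)/p))*((2:ℝ)-p)) * r ^ ((1/(p-1))*((2:ℝ)-p)) := by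
            rw [hX, Real.mul_rpow (Real.rpow_nonneg hR0.le _) (Real.rpow_nonneg hr _),
              ← Real.rpow_mul hR0.le, ← Real.rpow_mul hr]
          have x2 : r ^ ((1/(p-1))*((2:ℝ)-p)) ≤ R ^ (((2:ℝ)-p)/p) := by
            have e : r ^ ((1/(p-1))*((2:ℝ)-p)) = s ^ (((2:ℝ)-p)/p) := by
              rw [hs, ← Real.rpow_mul hr]
              congr 1
              rw [hP]; field_simp
            rw [e]
            exact Real.rpow_le_rpow hs0 hsR (div_nonneg (by linarith) hp0.le)
          calc X ^ ((2:ℝ)-p)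
              = R ^ ((-((n:ℝ)/p))*((2:ℝ)-p)) * r ^ ((1/(p-1))*((2:ℝ)-p)) := x1
            _ ≤ R ^ ((-((n:ℝ)/p))*((2:ℝ)-p)) * R ^ (((2:ℝ)-p)/p) :=
                mul_le_mul_of_nonneg_left x2 (Real.rpow_nonneg hR0.le _)
            _ = R ^ ((-((n:ℝ)/p))*((2:ℝ)-p) + ((2:ℝ)-p)/p) := (Real.rpow_add hR0 _ _).symm
            _ = R ^ (-(F+1)) := by
                congr 1
                rw [hF, hw, hA]; field_simp; ring
        have hXp2 : R ^ (F+1) ≤ X ^ (p-2) := by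
          have h1 : X^(p-2) = (X^((2:ℝ)-p))⁻¹ := by
            rw [show p-2 = -((2:ℝ)-p) by ring, Real.rpow_neg hXpos.le]
          have h2 : R^(F+1) = (R^(-(F+1)))⁻¹ := by rw [Real.rpow_neg hR0.le, inv_inv]
          rw [h1, h2]
          exact inv_anti₀ (Real.rpow_pos_of_pos hXpos _) hX2p
        have hxeb : (2:ℝ)^(p-2) * X^(p-2) ≤ (X + ε*b)^(p-2) := by
          have hmono := Real.rpow_le_rpow_of_nonpos (show (0:ℝ) < X + ε*b by positivity)
            (show X + ε*b ≤ 2*X by linarith) (show p-2 ≤ 0 by linarith)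
          calc (2:ℝ)^(p-2) * X^(p-2) = (2*X)^(p-2) :=
                (Real.mul_rpow (by norm_num) hXpos.le).symm
            _ ≤ (X + ε*b)^(p-2) := hmono
        have K : Cδ * R^F ≤ C/2 * (1+r)^(-P) * (X + ε*b)^(p-2) := by
          have base : C/2 * (2^(-P) * R⁻¹) * ((2:ℝ)^(p-2) * (R^F * R))
              ≤ C/2 * (1+r)^(-P) * (X + ε*b)^(p-2) := by
            apply mul_le_mul (mul_le_mul_of_nonneg_left hinv1r hC2.le) ?h2 (by positivity)
              (by positivity)
            have e : R^F * R = R^(F+1) := by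
              calc R^F * R = R^F * R^(1:ℝ) := by rw [Real.rpow_one]
                _ = R^(F+1) := (Real.rpow_add hR0 _ _).symm
            rw [e]
            calc (2:ℝ)^(p-2) * R^(F+1) ≤ (2:ℝ)^(p-2) * X^(p-2) :=
                  mul_le_mul_of_nonneg_left hXp2 (Real.rpow_nonneg (by norm_num) _)
              _ ≤ (X + ε*b)^(p-2) := hxeb
          have eqb : C/2 * (2^(-P) * R⁻¹) * ((2:ℝ)^(p-2) * (R^F * R)) = (1+Cδ) * R^F := by
            rw [← hCkey]
            field_simp
          calc Cδ * R^F ≤ (1+Cδ) * R^F :=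
                mul_le_mul_of_nonneg_right (by linarith) (Real.rpow_nonneg hR0.le _)
            _ = C/2 * (2^(-P) * R⁻¹) * ((2:ℝ)^(p-2) * (R^F * R)) := eqb.symm
            _ ≤ C/2 * (1+r)^(-P) * (X + ε*b)^(p-2) := base
        have K2 : Cδ * R^F * b^2 ≤ C/2 * (1+r)^(-P) * (X + ε*b)^(p-2) * b^2 :=
          mul_le_mul_of_nonneg_right K (sq_nonneg b)
        linarith [step1]
  -- assemble
  have hB2' : R^(A+p-1) * (a^2 * ε^p * b^p * R^((n:ℝ)-p)) ≤ R^(A+p-1) * (a^(2-p) * b^p) :=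
    mul_le_mul_of_nonneg_left B2 (Real.rpow_nonneg hR0.le _)
  have expand : R^(A+p-1) * (a^2 * ζ^p * s * R^(-p) + a^2 * ε^p * b^p * R^((n:ℝ)-p)
        + a^(2-p) * b^p)
      = R^(A+p-1) * (a^2 * ζ^p * s * R^(-p)) + R^(A+p-1) * (a^2 * ε^p * b^p * R^((n:ℝ)-p))
        + R^(A+p-1) * (a^(2-p) * b^p) := by ring
  rw [expand]
  linarith [B1, hB2', B3]
end
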